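/- arXiv:2002.05355 — 4 statements merged into one kernel-verified Lean document; each statement's English description precedes it below -/
import Mathlib

section
/- If f ∈ C^∞(ℝ) with f(0) = f'(0) = 0, and u, v ∈ ε^n S^{-m} with n, m ≥ 1 (so |Z^I u|, |Z^I v| ≤ C_I ε^n t^{-m+C_Iε} on D), with ε sufficiently small and T_R sufficiently large (both independent of I), then f(u) - f(v) ∈ ε^{2n} S^{-2m}, i.e. |Z^I(f(u)-f(v))| ≤ C_I ε^{2n} t^{-2m + C_I ε} on D for every multi-index I. -/
open MeasureTheory

noncomputable section

/-- Points of the spacetime `ℝ^{1+3}`. -/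
abbrev Pt := ℝ × EuclideanSpace ℝ (Fin 3)

/-- Time derivative `∂_t`. -/
def dt' (φ : Pt → ℝ) (p : Pt) : ℝ := fderiv ℝ φ p (1, 0)

/-- Spatial derivative `∂_i`. -/
def dx' (i : Fin 3) (φ : Pt → ℝ) (p : Pt) : ℝ :=
  fderiv ℝ φ p (0, EuclideanSpace.single i 1)

/-- Scaling vector field `S = t ∂_t + r ∂_r = t ∂_t + Σ xᵢ ∂_i`. -/
def scal' (φ : Pt → ℝ) (p : Pt) : ℝ := p.1 * dt' φ p + ∑ i, p.2 i * dx' i φ p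

/-- Rotation `Ω_{ij} = x_j ∂_i - x_i ∂_j`. -/
def rot' (i j : Fin 3) (φ : Pt → ℝ) (p : Pt) : ℝ :=
  p.2 j * dx' i φ p - p.2 i * dx' j φ p

/-- Lorentz boost `Ω_{0i} = x_i ∂_t + t ∂_i`. -/
def boost' (i : Fin 3) (φ : Pt → ℝ) (p : Pt) : ℝ :=
  p.2 i * dt' φ p + p.1 * dx' i φ p

/-- The list of commuting vector fields. -/
def CVFs : List ((Pt → ℝ) → Pt → ℝ) :=
  [dt', dx' 0, dx' 1, dx' 2, scal', rot' 0 1, rot' 0 2, rot' 1 2,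
   boost' 0, boost' 1, boost' 2]

/-- `Z^I φ` for a word `I` of vector fields. -/
def applyL : List ((Pt → ℝ) → Pt → ℝ) → (Pt → ℝ) → Pt → ℝ
  | [], φ => φ
  | Z :: L, φ => Z (applyL L φ)

/-- Spatial `L²` norm of `ψ(t, ·)`. -/
def L2n (ψ : Pt → ℝ) (t : ℝ) : ℝ :=
  Real.sqrt (∫ x : EuclideanSpace ℝ (Fin 3), (ψ (t, x))^2)


/-- `F ∈ ε^n S^m` on the region `D`: for every product `Z^I` of commuting
vector fields there is `C_I > 0` with `|Z^I F| ≤ C_I ε^n t^{m + C_I ε}` on `D`. -/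
def SymClP (D : Set Pt) (ε : ℝ) (n : ℕ) (m : ℝ) (F : Pt → ℝ) : Prop :=
  ∀ L : List ((Pt → ℝ) → Pt → ℝ), (∀ Z ∈ L, Z ∈ CVFs) →
    ∃ C > 0, ∀ p ∈ D, |applyL L F p| ≤ C * ε ^ n * p.1 ^ (m + C * ε)

section SymbolAux

open scoped ContDiff

abbrev VF := (Pt → ℝ) → Pt → ℝ

abbrev E3 := EuclideanSpace ℝ (Fin 3)

/-- A first-order vector field with smooth coefficients. -/
def IsVF (Z : VF) : Prop :=
  ∃ w : Pt → Pt, ContDiff ℝ ∞ w ∧ ∀ φ p, Z φ p = fderiv ℝ φ p (w p)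

lemma coord_smooth (i : Fin 3) : ContDiff ℝ ∞ (fun p : Pt => p.2 i) :=
  (EuclideanSpace.proj (𝕜 := ℝ) i).contDiff.comp contDiff_snd

lemma isVF_dt : IsVF dt' :=
  ⟨fun _ => (1, 0), contDiff_const, fun _ _ => rfl⟩

lemma isVF_dx (i : Fin 3) : IsVF (dx' i) :=
  ⟨fun _ => (0, EuclideanSpace.single i 1), contDiff_const, fun _ _ => rfl⟩

lemma isVF_scal : IsVF scal' := by
  refine ⟨fun p => p.1 • ((1:ℝ), (0:E3)) + ∑ i, p.2 i • ((0:ℝ), EuclideanSpace.single i (1:ℝ)),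
    ?_, ?_⟩
  · exact (contDiff_fst.smul contDiff_const).add
      (ContDiff.sum fun i _ => (coord_smooth i).smul contDiff_const)
  · intro φ p
    show scal' φ p = fderiv ℝ φ p _
    rw [map_add, _root_.map_smul, map_sum]
    simp only [_root_.map_smul, smul_eq_mul]
    rfl

lemma isVF_rot (i j : Fin 3) : IsVF (rot' i j) := by
  refine ⟨fun p => p.2 j • ((0:ℝ), EuclideanSpace.single i (1:ℝ))
      - p.2 i • ((0:ℝ), EuclideanSpace.single j (1:ℝ)), ?_, ?_⟩
  · exact ((coord_smooth j).smul contDiff_const).sub ((coord_smooth i).smul contDiff_const)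
  · intro φ p
    show rot' i j φ p = fderiv ℝ φ p _
    rw [map_sub, _root_.map_smul, _root_.map_smul]
    simp only [smul_eq_mul]
    rfl

lemma isVF_boost (i : Fin 3) : IsVF (boost' i) := by
  refine ⟨fun p => p.2 i • ((1:ℝ), (0:E3)) + p.1 • ((0:ℝ), EuclideanSpace.single i (1:ℝ)),
    ?_, ?_⟩
  · exact ((coord_smooth i).smul contDiff_const).add (contDiff_fst.smul contDiff_const)
  · intro φ p
    show boost' i φ p = fderiv ℝ φ p _
    rw [map_add, _root_.map_smul, _root_.map_smul]
    simp only [smul_eq_mul]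
    rfl

lemma isVF_of_mem {Z : VF} (hZ : Z ∈ CVFs) : IsVF Z := by
  simp only [CVFs, List.mem_cons, List.not_mem_nil, or_false] at hZ
  rcases hZ with rfl | rfl | rfl | rfl | rfl | rfl | rfl | rfl | rfl | rfl | rfl
  exacts [isVF_dt, isVF_dx 0, isVF_dx 1, isVF_dx 2, isVF_scal, isVF_rot 0 1, isVF_rot 0 2,
    isVF_rot 1 2, isVF_boost 0, isVF_boost 1, isVF_boost 2]

lemma IsVF.smooth {Z : VF} (hZ : IsVF Z) {φ : Pt → ℝ} (hφ : ContDiff ℝ ∞ φ) :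
    ContDiff ℝ ∞ (Z φ) := by
  obtain ⟨w, hw, hrep⟩ := hZ
  have h : Z φ = fun p => fderiv ℝ φ p (w p) := funext (hrep φ)
  rw [h]
  exact (hφ.fderiv_right (by norm_num)).clm_apply hw

lemma IsVF.zero {Z : VF} (hZ : IsVF Z) : Z (fun _ => (0:ℝ)) = fun _ => 0 := by
  obtain ⟨w, -, hrep⟩ := hZ
  funext p
  rw [hrep]
  simp

lemma IsVF.addf {Z : VF} (hZ : IsVF Z) {F G : Pt → ℝ} (hF : ContDiff ℝ ∞ F)
    (hG : ContDiff ℝ ∞ G) : Z (fun p => F p + G p) = fun p => Z F p + Z G p := by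
  obtain ⟨w, -, hrep⟩ := hZ
  funext p
  rw [hrep, hrep, hrep,
    fderiv_fun_add (hF.differentiable (by norm_num) p) (hG.differentiable (by norm_num) p)]
  simp

lemma IsVF.subf {Z : VF} (hZ : IsVF Z) {F G : Pt → ℝ} (hF : ContDiff ℝ ∞ F)
    (hG : ContDiff ℝ ∞ G) : Z (fun p => F p - G p) = fun p => Z F p - Z G p := by
  obtain ⟨w, -, hrep⟩ := hZ
  funext p
  rw [hrep, hrep, hrep,
    fderiv_fun_sub (hF.differentiable (by norm_num) p) (hG.differentiable (by norm_num) p)]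
  simp

lemma IsVF.mulf {Z : VF} (hZ : IsVF Z) {F G : Pt → ℝ} (hF : ContDiff ℝ ∞ F)
    (hG : ContDiff ℝ ∞ G) :
    Z (fun p => F p * G p) = fun p => Z F p * G p + F p * Z G p := by
  obtain ⟨w, -, hrep⟩ := hZ
  funext p
  rw [hrep, hrep, hrep,
    fderiv_fun_mul (hF.differentiable (by norm_num) p) (hG.differentiable (by norm_num) p)]
  simp only [ContinuousLinearMap.add_apply, ContinuousLinearMap.coe_smul', Pi.smul_apply,
    smul_eq_mul]
  ring

lemma IsVF.compf {Z : VF} (hZ : IsVF Z) {g : ℝ → ℝ} {w : Pt → ℝ} (hg : ContDiff ℝ ∞ g)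
    (hw : ContDiff ℝ ∞ w) :
    Z (fun p => g (w p)) = fun p => deriv g (w p) * Z w p := by
  obtain ⟨W, -, hrep⟩ := hZ
  funext p
  rw [hrep, hrep]
  have h1 : fderiv ℝ (fun q => g (w q)) p = (fderiv ℝ g (w p)).comp (fderiv ℝ w p) :=
    fderiv_comp p (hg.differentiable (by norm_num) (w p)) (hw.differentiable (by norm_num) p)
  rw [h1, ContinuousLinearMap.comp_apply]
  set y := fderiv ℝ w p (W p)
  calc (fderiv ℝ g (w p)) y = (fderiv ℝ g (w p)) (y • 1) := by rw [smul_eq_mul, mul_one]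
    _ = y • (fderiv ℝ g (w p)) 1 := _root_.map_smul _ _ _
    _ = deriv g (w p) * y := by rw [fderiv_apply_one_eq_deriv, smul_eq_mul, mul_comm]

lemma applyL_append (L₁ L₂ : List VF) (φ : Pt → ℝ) :
    applyL (L₁ ++ L₂) φ = applyL L₁ (applyL L₂ φ) := by
  induction L₁ with
  | nil => rfl
  | cons Z L ih => simp [applyL, ih]

lemma applyL_smooth {L : List VF} (hL : ∀ Z ∈ L, Z ∈ CVFs) {φ : Pt → ℝ}
    (hφ : ContDiff ℝ ∞ φ) : ContDiff ℝ ∞ (applyL L φ) := by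
  induction L with
  | nil => exact hφ
  | cons Z L ih =>
    exact (isVF_of_mem (hL Z (List.mem_cons_self))).smooth
      (ih fun A hA => hL A (List.mem_cons_of_mem _ hA))

def evalPairs (F G : Pt → ℝ) : List (List VF × List VF) → Pt → ℝ
  | [] => fun _ => 0
  | q :: rest => fun p => applyL q.1 F p * applyL q.2 G p + evalPairs F G rest p

def expandP (Z : VF) : List (List VF × List VF) → List (List VF × List VF)
  | [] => []
  | q :: rest => (Z :: q.1, q.2) :: (q.1, Z :: q.2) :: expandP Z rest

def GoodPair (N : ℕ) (q : List VF × List VF) : Prop :=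
  (∀ A ∈ q.1, A ∈ CVFs) ∧ (∀ A ∈ q.2, A ∈ CVFs) ∧ q.1.length + q.2.length = N

lemma evalPairs_smooth {F G : Pt → ℝ} (hF : ContDiff ℝ ∞ F) (hG : ContDiff ℝ ∞ G) :
    ∀ ps : List (List VF × List VF),
      (∀ q ∈ ps, (∀ A ∈ q.1, A ∈ CVFs) ∧ (∀ A ∈ q.2, A ∈ CVFs)) →
      ContDiff ℝ ∞ (evalPairs F G ps) := by
  intro ps
  induction ps with
  | nil => intro _; exact contDiff_const
  | cons q rest ih =>
    intro h
    obtain ⟨h1, h2⟩ := h q (List.mem_cons_self)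
    exact ((applyL_smooth h1 hF).mul (applyL_smooth h2 hG)).add
      (ih fun r hr => h r (List.mem_cons_of_mem _ hr))

lemma IsVF.evalPairs_eq {Z : VF} (hZ : IsVF Z) {F G : Pt → ℝ} (hF : ContDiff ℝ ∞ F)
    (hG : ContDiff ℝ ∞ G) :
    ∀ ps : List (List VF × List VF),
      (∀ q ∈ ps, (∀ A ∈ q.1, A ∈ CVFs) ∧ (∀ A ∈ q.2, A ∈ CVFs)) →
      Z (evalPairs F G ps) = evalPairs F G (expandP Z ps) := by
  intro ps
  induction ps with
  | nil => intro _; exact hZ.zero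
  | cons q rest ih =>
    intro h
    obtain ⟨h1, h2⟩ := h q (List.mem_cons_self)
    have hrest := fun r hr => h r (List.mem_cons_of_mem _ hr)
    have hA : ContDiff ℝ ∞ (applyL q.1 F) := applyL_smooth h1 hF
    have hB : ContDiff ℝ ∞ (applyL q.2 G) := applyL_smooth h2 hG
    have hE : ContDiff ℝ ∞ (evalPairs F G rest) := evalPairs_smooth hF hG rest hrest
    show Z (fun p => applyL q.1 F p * applyL q.2 G p + evalPairs F G rest p) = _
    rw [hZ.addf (hA.mul hB) hE, hZ.mulf hA hB, ih hrest]
    funext p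
    show (applyL (Z :: q.1) F p * applyL q.2 G p + applyL q.1 F p * applyL (Z :: q.2) G p)
        + evalPairs F G (expandP Z rest) p
      = applyL (Z :: q.1) F p * applyL q.2 G p
        + (applyL q.1 F p * applyL (Z :: q.2) G p + evalPairs F G (expandP Z rest) p)
    ring

lemma expandP_good {Z : VF} (hZ : Z ∈ CVFs) {N : ℕ} :
    ∀ ps : List (List VF × List VF), (∀ q ∈ ps, GoodPair N q) →
      ∀ q ∈ expandP Z ps, GoodPair (N + 1) q := by
  intro ps
  induction ps with
  | nil => intro _ q hq; cases hq
  | cons r rest ih =>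
    intro h q hq
    obtain ⟨h1, h2, h3⟩ := h r (List.mem_cons_self)
    have hrest := ih fun s hs => h s (List.mem_cons_of_mem _ hs)
    simp only [expandP, List.mem_cons] at hq
    rcases hq with rfl | rfl | hq
    · refine ⟨fun A hA => ?_, h2, by simp only [List.length_cons]; omega⟩
      rcases List.mem_cons.mp hA with rfl | hA
      exacts [hZ, h1 A hA]
    · refine ⟨h1, fun A hA => ?_, by simp only [List.length_cons]; omega⟩
      rcases List.mem_cons.mp hA with rfl | hA
      exacts [hZ, h2 A hA]
    · exact hrest q hq

lemma rep_exists {F G : Pt → ℝ} (hF : ContDiff ℝ ∞ F) (hG : ContDiff ℝ ∞ G) :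
    ∀ L : List VF, (∀ Z ∈ L, Z ∈ CVFs) →
      ∃ ps : List (List VF × List VF), (∀ q ∈ ps, GoodPair L.length q) ∧
        applyL L (fun p => F p * G p) = evalPairs F G ps := by
  intro L
  induction L with
  | nil =>
    intro _
    refine ⟨[([], [])], ?_, ?_⟩
    · intro q hq
      simp only [List.mem_singleton] at hq
      subst hq
      exact ⟨by simp, by simp, by simp⟩
    · funext p
      simp [applyL, evalPairs]
  | cons Z L ih =>
    intro hL
    obtain ⟨ps, hps, heq⟩ := ih fun A hA => hL A (List.mem_cons_of_mem _ hA)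
    have hZc : Z ∈ CVFs := hL Z (List.mem_cons_self)
    have hZ : IsVF Z := isVF_of_mem hZc
    refine ⟨expandP Z ps, ?_, ?_⟩
    · intro q hq
      have := expandP_good hZc ps hps q hq
      simpa [List.length_cons] using this
    · show Z (applyL L fun p => F p * G p) = _
      rw [heq]
      exact hZ.evalPairs_eq hF hG ps fun q hq => ⟨(hps q hq).1, (hps q hq).2.1⟩

section Bounds

variable {D : Set Pt} {ε : ℝ}

lemma evalPairs_bound (hD1 : ∀ p ∈ D, 1 ≤ p.1) (hε : 0 < ε) (F G : Pt → ℝ)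
    (k₁ k₂ : ℕ) (μ₁ μ₂ : ℝ) :
    ∀ ps : List (List VF × List VF),
      (∀ q ∈ ps,
        (∃ C > 0, ∀ p ∈ D, |applyL q.1 F p| ≤ C * ε ^ k₁ * p.1 ^ (μ₁ + C * ε)) ∧
        (∃ C > 0, ∀ p ∈ D, |applyL q.2 G p| ≤ C * ε ^ k₂ * p.1 ^ (μ₂ + C * ε))) →
      ∃ C > 0, ∀ p ∈ D, |evalPairs F G ps p| ≤ C * ε ^ (k₁ + k₂) * p.1 ^ (μ₁ + μ₂ + C * ε) := by
  intro ps
  induction ps with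
  | nil =>
    intro _
    refine ⟨1, one_pos, fun p hp => ?_⟩
    have ht := hD1 p hp
    have h0 : |evalPairs F G [] p| = 0 := by simp [evalPairs]
    rw [h0]
    have : (0:ℝ) ≤ p.1 ^ (μ₁ + μ₂ + 1 * ε) := Real.rpow_nonneg (by linarith) _
    positivity
  | cons q rest ih =>
    intro h
    obtain ⟨⟨C₁, hC₁, e₁⟩, ⟨C₂, hC₂, e₂⟩⟩ := h q (List.mem_cons_self)
    obtain ⟨C₀, hC₀, e₀⟩ := ih fun r hr => h r (List.mem_cons_of_mem _ hr)
    refine ⟨C₁ * C₂ + C₁ + C₂ + C₀, by positivity, fun p hp => ?_⟩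
    have ht := hD1 p hp
    have ht0 : (0:ℝ) < p.1 := lt_of_lt_of_le one_pos ht
    set C := C₁ * C₂ + C₁ + C₂ + C₀ with hCdef
    have hterm : |applyL q.1 F p * applyL q.2 G p|
        ≤ (C₁ * C₂) * ε ^ (k₁ + k₂) * p.1 ^ (μ₁ + μ₂ + (C₁ + C₂) * ε) := by
      rw [abs_mul]
      calc |applyL q.1 F p| * |applyL q.2 G p|
          ≤ (C₁ * ε ^ k₁ * p.1 ^ (μ₁ + C₁ * ε)) * (C₂ * ε ^ k₂ * p.1 ^ (μ₂ + C₂ * ε)) := by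
            apply mul_le_mul (e₁ p hp) (e₂ p hp) (abs_nonneg _)
            have : (0:ℝ) ≤ p.1 ^ (μ₁ + C₁ * ε) := Real.rpow_nonneg ht0.le _
            positivity
        _ = (C₁ * C₂) * ε ^ (k₁ + k₂) * p.1 ^ (μ₁ + μ₂ + (C₁ + C₂) * ε) := by
            have hcomb : p.1 ^ (μ₁ + C₁ * ε) * p.1 ^ (μ₂ + C₂ * ε)
                = p.1 ^ (μ₁ + μ₂ + (C₁ + C₂) * ε) := by
              rw [← Real.rpow_add ht0]
              congr 1
              ring
            rw [pow_add, ← hcomb]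
            ring
    have m1 : p.1 ^ (μ₁ + μ₂ + (C₁ + C₂) * ε) ≤ p.1 ^ (μ₁ + μ₂ + C * ε) :=
      Real.rpow_le_rpow_of_exponent_le ht
        (by rw [hCdef]; nlinarith [mul_pos (mul_pos hC₁ hC₂) hε, mul_pos hC₀ hε])
    have m0 : p.1 ^ (μ₁ + μ₂ + C₀ * ε) ≤ p.1 ^ (μ₁ + μ₂ + C * ε) :=
      Real.rpow_le_rpow_of_exponent_le ht
        (by rw [hCdef]; nlinarith [mul_pos (mul_pos hC₁ hC₂) hε, mul_pos hC₁ hε, mul_pos hC₂ hε])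
    have hek : (0:ℝ) ≤ ε ^ (k₁ + k₂) := by positivity
    have hrC : (0:ℝ) ≤ p.1 ^ (μ₁ + μ₂ + C * ε) := Real.rpow_nonneg ht0.le _
    calc |evalPairs F G (q :: rest) p|
        ≤ |applyL q.1 F p * applyL q.2 G p| + |evalPairs F G rest p| := by
          show |applyL q.1 F p * applyL q.2 G p + evalPairs F G rest p| ≤ _
          exact abs_add_le _ _
      _ ≤ (C₁ * C₂) * ε ^ (k₁ + k₂) * p.1 ^ (μ₁ + μ₂ + (C₁ + C₂) * ε)
            + C₀ * ε ^ (k₁ + k₂) * p.1 ^ (μ₁ + μ₂ + C₀ * ε) :=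
          add_le_add hterm (e₀ p hp)
      _ ≤ (C₁ * C₂) * ε ^ (k₁ + k₂) * p.1 ^ (μ₁ + μ₂ + C * ε)
            + C₀ * ε ^ (k₁ + k₂) * p.1 ^ (μ₁ + μ₂ + C * ε) :=
          add_le_add (mul_le_mul_of_nonneg_left m1 (by positivity))
            (mul_le_mul_of_nonneg_left m0 (by positivity))
      _ ≤ C * ε ^ (k₁ + k₂) * p.1 ^ (μ₁ + μ₂ + C * ε) := by
          rw [hCdef]
          nlinarith [mul_nonneg (mul_nonneg (add_pos hC₁ hC₂).le hek) hrC]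

lemma mul_bound (hD1 : ∀ p ∈ D, 1 ≤ p.1) (hε : 0 < ε)
    (F G : Pt → ℝ) (hF : ContDiff ℝ ∞ F) (hG : ContDiff ℝ ∞ G)
    (k₁ k₂ : ℕ) (μ₁ μ₂ : ℝ)
    {L : List VF} (hL : ∀ Z ∈ L, Z ∈ CVFs)
    (HF : ∀ S : List VF, (∀ Z ∈ S, Z ∈ CVFs) → S.length ≤ L.length →
      ∃ C > 0, ∀ p ∈ D, |applyL S F p| ≤ C * ε ^ k₁ * p.1 ^ (μ₁ + C * ε))
    (HG : ∀ S : List VF, (∀ Z ∈ S, Z ∈ CVFs) → S.length ≤ L.length →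
      ∃ C > 0, ∀ p ∈ D, |applyL S G p| ≤ C * ε ^ k₂ * p.1 ^ (μ₂ + C * ε)) :
    ∃ C > 0, ∀ p ∈ D, |applyL L (fun p => F p * G p) p|
      ≤ C * ε ^ (k₁ + k₂) * p.1 ^ (μ₁ + μ₂ + C * ε) := by
  obtain ⟨ps, hps, heq⟩ := rep_exists hF hG L hL
  obtain ⟨C, hC, hb⟩ := evalPairs_bound hD1 hε F G k₁ k₂ μ₁ μ₂ ps (fun q hq => by
    obtain ⟨h1, h2, h3⟩ := hps q hq
    exact ⟨HF q.1 h1 (by omega), HG q.2 h2 (by omega)⟩)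
  exact ⟨C, hC, fun p hp => by rw [heq]; exact hb p hp⟩

lemma sup_bound (h : ℝ → ℝ) (hh : Continuous h) :
    ∃ M > 0, ∀ x ∈ Set.Icc (-1:ℝ) 1, |h x| ≤ M := by
  obtain ⟨xm, hxm, hmax⟩ := isCompact_Icc.exists_isMaxOn
    (⟨0, by norm_num⟩ : (Set.Icc (-1:ℝ) 1).Nonempty)
    ((continuous_abs.comp hh).continuousOn)
  exact ⟨|h xm| + 1, by positivity, fun x hx => by
    have h2 : |h x| ≤ |h xm| := hmax hx
    linarith⟩

lemma mvt_bound (h : ℝ → ℝ) (hh : ContDiff ℝ ∞ h) (h0 : h 0 = 0) :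
    ∃ M > 0, ∀ x ∈ Set.Icc (-1:ℝ) 1, |h x| ≤ M * |x| := by
  obtain ⟨M, hM, hMb⟩ := sup_bound (deriv h) (hh.continuous_deriv (by norm_num))
  refine ⟨M, hM, fun x hx => ?_⟩
  have key := Convex.norm_image_sub_le_of_norm_deriv_le
    (f := h) (s := Set.Icc (-1:ℝ) 1)
    (fun y _ => (hh.differentiable (by norm_num)).differentiableAt)
    (fun y hy => hMb y hy) (convex_Icc _ _)
    (x := 0) (y := x) (Set.mem_Icc.mpr ⟨by norm_num, by norm_num⟩) hx
  simpa [h0, Real.norm_eq_abs] using key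

lemma mvt2_bound (h : ℝ → ℝ) (hh : ContDiff ℝ ∞ h) (h0 : h 0 = 0) (h1 : deriv h 0 = 0) :
    ∃ M > 0, ∀ x ∈ Set.Icc (-1:ℝ) 1, |h x| ≤ M * (|x| * |x|) := by
  obtain ⟨M, hM, hMb⟩ := mvt_bound (deriv h) (contDiff_infty_iff_deriv.mp hh).2 h1
  refine ⟨M, hM, fun x hx => ?_⟩
  have hx1 : |x| ≤ 1 := abs_le.mpr ⟨hx.1, hx.2⟩
  have key := Convex.norm_image_sub_le_of_norm_deriv_le
    (f := h) (s := Set.Icc (-|x|) |x|) (C := M * |x|)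
    (fun y _ => (hh.differentiable (by norm_num)).differentiableAt)
    (fun y hy => by
      have hyx : |y| ≤ |x| := abs_le.mpr ⟨hy.1, hy.2⟩
      have hy1 : y ∈ Set.Icc (-1:ℝ) 1 := ⟨by linarith [hy.1], by linarith [hy.2]⟩
      have := hMb y hy1
      calc ‖deriv h y‖ ≤ M * |y| := this
        _ ≤ M * |x| := by nlinarith)
    (convex_Icc _ _) (x := 0) (y := x)
    (Set.mem_Icc.mpr ⟨by simp [abs_nonneg], abs_nonneg x⟩)
    (Set.mem_Icc.mpr ⟨neg_abs_le x, le_abs_self x⟩)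
  have : |h x| ≤ M * |x| * |x| := by simpa [h0, Real.norm_eq_abs] using key
  linarith [this, (mul_assoc M |x| |x|)]

end Bounds

section Comp

variable {D : Set Pt} {ε : ℝ} {n m : ℕ} {u : Pt → ℝ}

lemma comp_base0 (hD1 : ∀ p ∈ D, 1 ≤ p.1) (hε : 0 < ε)
    (hu1 : ∀ p ∈ D, |u p| ≤ 1) (h : ℝ → ℝ) (hc : Continuous h) :
    ∃ C > 0, ∀ p ∈ D, |h (u p)| ≤ C * ε ^ 0 * p.1 ^ ((0:ℝ) + C * ε) := by
  obtain ⟨M, hM, hMb⟩ := sup_bound h hc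
  refine ⟨M, hM, fun p hp => ?_⟩
  have ht := hD1 p hp
  have h1 : (1:ℝ) ≤ p.1 ^ ((0:ℝ) + M * ε) := Real.one_le_rpow ht (by positivity)
  have h2 := hMb (u p) (Set.mem_Icc.mpr (abs_le.mp (hu1 p hp)))
  simp only [pow_zero, mul_one]
  nlinarith

lemma comp0 (hD1 : ∀ p ∈ D, 1 ≤ p.1) (hε : 0 < ε) (hε1 : ε ≤ 1)
    (hus : ContDiff ℝ ∞ u) (hu : SymClP D ε n (-(m : ℝ)) u) (hu1 : ∀ p ∈ D, |u p| ≤ 1) :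
    ∀ N : ℕ, ∀ h : ℝ → ℝ, ContDiff ℝ ∞ h → ∀ L : List VF, (∀ Z ∈ L, Z ∈ CVFs) →
      L.length ≤ N →
      ∃ C > 0, ∀ p ∈ D, |applyL L (fun p => h (u p)) p| ≤ C * ε ^ 0 * p.1 ^ ((0:ℝ) + C * ε) := by
  intro N
  induction N with
  | zero =>
    intro h hh L hL hlen
    have hnil : L = [] := List.length_eq_zero_iff.mp (Nat.le_zero.mp hlen)
    subst hnil
    exact comp_base0 hD1 hε hu1 h hh.continuous
  | succ N ih =>
    intro h hh L hL hlen
    rcases List.eq_nil_or_concat L with rfl | ⟨L', Z, rfl⟩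
    · exact comp_base0 hD1 hε hu1 h hh.continuous
    · have hZc : Z ∈ CVFs := hL Z (by simp [List.concat_eq_append])
      have hL' : ∀ A ∈ L', A ∈ CVFs := fun A hA =>
        hL A (by simp [List.concat_eq_append, hA])
      have hZ : IsVF Z := isVF_of_mem hZc
      have hlen' : L'.length ≤ N := by
        simp only [List.concat_eq_append, List.length_append, List.length_singleton] at hlen
        omega
      have hdh : ContDiff ℝ ∞ (deriv h) := (contDiff_infty_iff_deriv.mp hh).2
      have heq : applyL (L'.concat Z) (fun p => h (u p))
          = applyL L' (fun p => deriv h (u p) * applyL [Z] u p) := by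
        rw [List.concat_eq_append, applyL_append]
        have h2 : applyL [Z] (fun p => h (u p)) = fun p => deriv h (u p) * applyL [Z] u p :=
          hZ.compf hh hus
        rw [h2]
      have hFb : ∀ S : List VF, (∀ A ∈ S, A ∈ CVFs) → S.length ≤ L'.length →
          ∃ C > 0, ∀ p ∈ D, |applyL S (fun p => deriv h (u p)) p|
            ≤ C * ε ^ 0 * p.1 ^ ((0:ℝ) + C * ε) :=
        fun S hS hSl => ih (deriv h) hdh S hS (le_trans hSl hlen')
      have hGb : ∀ S : List VF, (∀ A ∈ S, A ∈ CVFs) → S.length ≤ L'.length →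
          ∃ C > 0, ∀ p ∈ D, |applyL S (applyL [Z] u) p|
            ≤ C * ε ^ n * p.1 ^ (-(m : ℝ) + C * ε) := by
        intro S hS _
        obtain ⟨C, hC, hb⟩ := hu (S ++ [Z]) (by
          intro A hA
          rcases List.mem_append.mp hA with hA | hA
          · exact hS A hA
          · simp only [List.mem_singleton] at hA; subst hA; exact hZc)
        exact ⟨C, hC, fun p hp => by rw [← applyL_append]; exact hb p hp⟩
      obtain ⟨C, hC, hb⟩ := mul_bound hD1 hε (fun p => deriv h (u p)) (applyL [Z] u)
        (hdh.comp hus) (applyL_smooth (by simpa using hZc) hus) 0 n 0 (-(m : ℝ)) hL' hFb hGb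
      refine ⟨C, hC, fun p hp => ?_⟩
      rw [heq]
      have ht := hD1 p hp
      have hbp := hb p hp
      have e1 : p.1 ^ ((0:ℝ) + -(m:ℝ) + C * ε) ≤ p.1 ^ ((0:ℝ) + C * ε) :=
        Real.rpow_le_rpow_of_exponent_le ht
          (by have : (0:ℝ) ≤ (m:ℝ) := Nat.cast_nonneg m; linarith)
      have e2 : ε ^ (0 + n) ≤ ε ^ 0 := by
        simp only [Nat.zero_add, pow_zero]
        exact pow_le_one₀ hε.le hε1
      have hrn : (0:ℝ) ≤ p.1 ^ ((0:ℝ) + -(m:ℝ) + C * ε) := Real.rpow_nonneg (by linarith) _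
      calc |applyL L' (fun p => deriv h (u p) * applyL [Z] u p) p|
          ≤ C * ε ^ (0 + n) * p.1 ^ ((0:ℝ) + -(m:ℝ) + C * ε) := hbp
        _ ≤ C * ε ^ 0 * p.1 ^ ((0:ℝ) + C * ε) := by
            apply mul_le_mul (mul_le_mul_of_nonneg_left e2 hC.le) e1 hrn (by positivity)

lemma comp_s0 (hD1 : ∀ p ∈ D, 1 ≤ p.1) (hε : 0 < ε) (hε1 : ε ≤ 1)
    (hus : ContDiff ℝ ∞ u) (hu : SymClP D ε n (-(m : ℝ)) u) (hu1 : ∀ p ∈ D, |u p| ≤ 1)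
    (h : ℝ → ℝ) (hh : ContDiff ℝ ∞ h) : SymClP D ε 0 0 (fun p => h (u p)) := by
  intro L hL
  obtain ⟨C, hC, hb⟩ := comp0 hD1 hε hε1 hus hu hu1 L.length h hh L hL le_rfl
  exact ⟨C, hC, fun p hp => by simpa using hb p hp⟩

lemma concat_aux {L : List VF} {Z : VF} (hL : ∀ A ∈ L.concat Z, A ∈ CVFs) :
    Z ∈ CVFs ∧ (∀ A ∈ L, A ∈ CVFs) :=
  ⟨hL Z (by simp [List.concat_eq_append]),
   fun A hA => hL A (by simp [List.concat_eq_append, hA])⟩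

lemma comp1 (hD1 : ∀ p ∈ D, 1 ≤ p.1) (hε : 0 < ε) (hε1 : ε ≤ 1)
    (hus : ContDiff ℝ ∞ u) (hu : SymClP D ε n (-(m : ℝ)) u) (hu1 : ∀ p ∈ D, |u p| ≤ 1)
    (g : ℝ → ℝ) (hg : ContDiff ℝ ∞ g) (hg0 : g 0 = 0) :
    SymClP D ε n (-(m : ℝ)) (fun p => g (u p)) := by
  intro L hL
  rcases List.eq_nil_or_concat L with rfl | ⟨L', Z, rfl⟩
  · -- base case : |g (u p)| ≤ M |u p|
    obtain ⟨M, hM, hMb⟩ := mvt_bound g hg hg0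
    obtain ⟨Cu, hCu, hub⟩ := hu [] (by simp)
    refine ⟨(M + 1) * (Cu + 1), by positivity, fun p hp => ?_⟩
    have ht := hD1 p hp
    have h2 := hMb (u p) (Set.mem_Icc.mpr (abs_le.mp (hu1 p hp)))
    have h3 : |u p| ≤ Cu * ε ^ n * p.1 ^ (-(m:ℝ) + Cu * ε) := hub p hp
    have e1 : p.1 ^ (-(m:ℝ) + Cu * ε) ≤ p.1 ^ (-(m:ℝ) + ((M + 1) * (Cu + 1)) * ε) :=
      Real.rpow_le_rpow_of_exponent_le ht
        (by nlinarith [mul_pos hM hε, mul_pos (mul_pos hM hCu) hε])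
    have hrn : (0:ℝ) ≤ p.1 ^ (-(m:ℝ) + Cu * ε) := Real.rpow_nonneg (by linarith) _
    have hrn2 : (0:ℝ) ≤ p.1 ^ (-(m:ℝ) + ((M + 1) * (Cu + 1)) * ε) :=
      Real.rpow_nonneg (by linarith) _
    have hεn : (0:ℝ) ≤ ε ^ n := by positivity
    calc |applyL [] (fun p => g (u p)) p| = |g (u p)| := rfl
      _ ≤ M * |u p| := h2
      _ ≤ M * (Cu * ε ^ n * p.1 ^ (-(m:ℝ) + Cu * ε)) :=
          mul_le_mul_of_nonneg_left h3 hM.le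
      _ = (M * Cu) * ε ^ n * p.1 ^ (-(m:ℝ) + Cu * ε) := by ring
      _ ≤ (M * Cu) * ε ^ n * p.1 ^ (-(m:ℝ) + ((M + 1) * (Cu + 1)) * ε) :=
          mul_le_mul_of_nonneg_left e1 (by positivity)
      _ ≤ ((M + 1) * (Cu + 1)) * ε ^ n * p.1 ^ (-(m:ℝ) + ((M + 1) * (Cu + 1)) * ε) := by
          apply mul_le_mul_of_nonneg_right _ hrn2
          apply mul_le_mul_of_nonneg_right _ hεn
          nlinarith
  · obtain ⟨hZc, hL'⟩ := concat_aux hL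
    have hZ : IsVF Z := isVF_of_mem hZc
    have hdg : ContDiff ℝ ∞ (deriv g) := (contDiff_infty_iff_deriv.mp hg).2
    have heq : applyL (L'.concat Z) (fun p => g (u p))
        = applyL L' (fun p => deriv g (u p) * applyL [Z] u p) := by
      rw [List.concat_eq_append, applyL_append]
      have h2 : applyL [Z] (fun p => g (u p)) = fun p => deriv g (u p) * applyL [Z] u p :=
        hZ.compf hg hus
      rw [h2]
    have hFb : ∀ S : List VF, (∀ A ∈ S, A ∈ CVFs) → S.length ≤ L'.length →
        ∃ C > 0, ∀ p ∈ D, |applyL S (fun p => deriv g (u p)) p|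
          ≤ C * ε ^ 0 * p.1 ^ ((0:ℝ) + C * ε) :=
      fun S hS _ => comp_s0 hD1 hε hε1 hus hu hu1 (deriv g) hdg S hS
    have hGb : ∀ S : List VF, (∀ A ∈ S, A ∈ CVFs) → S.length ≤ L'.length →
        ∃ C > 0, ∀ p ∈ D, |applyL S (applyL [Z] u) p|
          ≤ C * ε ^ n * p.1 ^ (-(m : ℝ) + C * ε) := by
      intro S hS _
      obtain ⟨C, hC, hb⟩ := hu (S ++ [Z]) (by
        intro A hA
        rcases List.mem_append.mp hA with hA | hA
        · exact hS A hA
        · simp only [List.mem_singleton] at hA; subst hA; exact hZc)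
      exact ⟨C, hC, fun p hp => by rw [← applyL_append]; exact hb p hp⟩
    obtain ⟨C, hC, hb⟩ := mul_bound hD1 hε (fun p => deriv g (u p)) (applyL [Z] u)
      (hdg.comp hus) (applyL_smooth (by simpa using hZc) hus) 0 n 0 (-(m : ℝ)) hL' hFb hGb
    refine ⟨C, hC, fun p hp => ?_⟩
    rw [heq]
    have := hb p hp
    simpa using this

lemma comp2 (hD1 : ∀ p ∈ D, 1 ≤ p.1) (hε : 0 < ε) (hε1 : ε ≤ 1)
    (hus : ContDiff ℝ ∞ u) (hu : SymClP D ε n (-(m : ℝ)) u) (hu1 : ∀ p ∈ D, |u p| ≤ 1)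
    (g : ℝ → ℝ) (hg : ContDiff ℝ ∞ g) (hg0 : g 0 = 0) (hg1 : deriv g 0 = 0) :
    SymClP D ε (2 * n) (-(2 * (m : ℝ))) (fun p => g (u p)) := by
  intro L hL
  rcases List.eq_nil_or_concat L with rfl | ⟨L', Z, rfl⟩
  · obtain ⟨M, hM, hMb⟩ := mvt2_bound g hg hg0 hg1
    obtain ⟨Cu, hCu, hub⟩ := hu [] (by simp)
    set C := M * Cu * Cu + 2 * Cu + M + Cu + 1 with hCdef
    have hCpos : 0 < C := by rw [hCdef]; positivity
    refine ⟨C, hCpos, fun p hp => ?_⟩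
    have ht := hD1 p hp
    have ht0 : (0:ℝ) < p.1 := lt_of_lt_of_le one_pos ht
    have h2 := hMb (u p) (Set.mem_Icc.mpr (abs_le.mp (hu1 p hp)))
    have h3 : |u p| ≤ Cu * ε ^ n * p.1 ^ (-(m:ℝ) + Cu * ε) := hub p hp
    have hrn : (0:ℝ) ≤ p.1 ^ (-(m:ℝ) + Cu * ε) := Real.rpow_nonneg ht0.le _
    have hsq : |u p| * |u p|
        ≤ (Cu * ε ^ n * p.1 ^ (-(m:ℝ) + Cu * ε)) * (Cu * ε ^ n * p.1 ^ (-(m:ℝ) + Cu * ε)) :=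
      mul_le_mul h3 h3 (abs_nonneg _) (by positivity)
    have hcomb : p.1 ^ (-(m:ℝ) + Cu * ε) * p.1 ^ (-(m:ℝ) + Cu * ε)
        = p.1 ^ (-(2 * (m:ℝ)) + (2 * Cu) * ε) := by
      rw [← Real.rpow_add ht0]
      congr 1
      ring
    have e1 : p.1 ^ (-(2 * (m:ℝ)) + (2 * Cu) * ε) ≤ p.1 ^ (-(2 * (m:ℝ)) + C * ε) :=
      Real.rpow_le_rpow_of_exponent_le ht
        (by rw [hCdef]; nlinarith [mul_pos (mul_pos hM hCu) hCu, mul_pos hM hε])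
    have hrn2 : (0:ℝ) ≤ p.1 ^ (-(2 * (m:ℝ)) + C * ε) := Real.rpow_nonneg ht0.le _
    have hε2n : (0:ℝ) ≤ ε ^ (2 * n) := by positivity
    calc |applyL [] (fun p => g (u p)) p| = |g (u p)| := rfl
      _ ≤ M * (|u p| * |u p|) := h2
      _ ≤ M * ((Cu * ε ^ n * p.1 ^ (-(m:ℝ) + Cu * ε))
            * (Cu * ε ^ n * p.1 ^ (-(m:ℝ) + Cu * ε))) :=
          mul_le_mul_of_nonneg_left hsq hM.le
      _ = (M * Cu * Cu) * ε ^ (2 * n) * p.1 ^ (-(2 * (m:ℝ)) + (2 * Cu) * ε) := by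
          rw [two_mul, pow_add, ← hcomb]
          ring
      _ ≤ (M * Cu * Cu) * ε ^ (2 * n) * p.1 ^ (-(2 * (m:ℝ)) + C * ε) :=
          mul_le_mul_of_nonneg_left e1 (by positivity)
      _ ≤ C * ε ^ (2 * n) * p.1 ^ (-(2 * (m:ℝ)) + C * ε) := by
          apply mul_le_mul_of_nonneg_right _ hrn2
          apply mul_le_mul_of_nonneg_right _ hε2n
          rw [hCdef]
          nlinarith
  · obtain ⟨hZc, hL'⟩ := concat_aux hL
    have hZ : IsVF Z := isVF_of_mem hZc
    have hdg : ContDiff ℝ ∞ (deriv g) := (contDiff_infty_iff_deriv.mp hg).2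
    have heq : applyL (L'.concat Z) (fun p => g (u p))
        = applyL L' (fun p => deriv g (u p) * applyL [Z] u p) := by
      rw [List.concat_eq_append, applyL_append]
      have h2 : applyL [Z] (fun p => g (u p)) = fun p => deriv g (u p) * applyL [Z] u p :=
        hZ.compf hg hus
      rw [h2]
    have hFb : ∀ S : List VF, (∀ A ∈ S, A ∈ CVFs) → S.length ≤ L'.length →
        ∃ C > 0, ∀ p ∈ D, |applyL S (fun p => deriv g (u p)) p|
          ≤ C * ε ^ n * p.1 ^ (-(m:ℝ) + C * ε) :=
      fun S hS _ => comp1 hD1 hε hε1 hus hu hu1 (deriv g) hdg hg1 S hS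
    have hGb : ∀ S : List VF, (∀ A ∈ S, A ∈ CVFs) → S.length ≤ L'.length →
        ∃ C > 0, ∀ p ∈ D, |applyL S (applyL [Z] u) p|
          ≤ C * ε ^ n * p.1 ^ (-(m : ℝ) + C * ε) := by
      intro S hS _
      obtain ⟨C, hC, hb⟩ := hu (S ++ [Z]) (by
        intro A hA
        rcases List.mem_append.mp hA with hA | hA
        · exact hS A hA
        · simp only [List.mem_singleton] at hA; subst hA; exact hZc)
      exact ⟨C, hC, fun p hp => by rw [← applyL_append]; exact hb p hp⟩
    obtain ⟨C, hC, hb⟩ := mul_bound hD1 hε (fun p => deriv g (u p)) (applyL [Z] u)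
      (hdg.comp hus) (applyL_smooth (by simpa using hZc) hus) n n (-(m:ℝ)) (-(m : ℝ)) hL' hFb hGb
    refine ⟨C, hC, fun p hp => ?_⟩
    rw [heq]
    have hbp := hb p hp
    have h2n : 2 * n = n + n := two_mul n
    have hexp : -(2 * (m:ℝ)) + C * ε = -(m:ℝ) + -(m:ℝ) + C * ε := by ring
    rw [h2n, hexp]
    exact hbp

lemma applyL_sub {F G : Pt → ℝ} (hF : ContDiff ℝ ∞ F) (hG : ContDiff ℝ ∞ G) :
    ∀ L : List VF, (∀ Z ∈ L, Z ∈ CVFs) →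
      applyL L (fun p => F p - G p) = fun p => applyL L F p - applyL L G p := by
  intro L
  induction L with
  | nil => intro _; rfl
  | cons Z L ih =>
    intro hL
    have hZ : IsVF Z := isVF_of_mem (hL Z (List.mem_cons_self))
    have hL' : ∀ A ∈ L, A ∈ CVFs := fun A hA => hL A (List.mem_cons_of_mem _ hA)
    show Z (applyL L fun p => F p - G p) = _
    rw [ih hL']
    exact hZ.subf (applyL_smooth hL' hF) (applyL_smooth hL' hG)

end Comp

end SymbolAux

/-- If `f ∈ C^∞` with `f(0) = f'(0) = 0` and `u, v ∈ ε^n S^{-m}` with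
`n, m ≥ 1`, `ε` small and `T_R` large (so that `|u| + |v| ≤ 1` on `D`),
then `f(u) - f(v) ∈ ε^{2n} S^{-2m}`. -/
theorem symbol_class_composition (D : Set Pt) (ε T : ℝ) (n m : ℕ)
    (hn : 1 ≤ n) (hm : 1 ≤ m) (hε : 0 < ε) (hε1 : ε ≤ 1) (hT : 1 ≤ T)
    (hD : ∀ p ∈ D, T ≤ p.1)
    (f : ℝ → ℝ) (hf : ContDiff ℝ (⊤ : ℕ∞) f) (hf0 : f 0 = 0) (hf1 : deriv f 0 = 0)
    (u v : Pt → ℝ) (hus : ContDiff ℝ (⊤ : ℕ∞) u) (hvs : ContDiff ℝ (⊤ : ℕ∞) v)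
    (hu : SymClP D ε n (-(m : ℝ)) u) (hv : SymClP D ε n (-(m : ℝ)) v)
    (hbd : ∀ p ∈ D, |u p| + |v p| ≤ 1) :
    SymClP D ε (2 * n) (-(2 * (m : ℝ))) (fun p => f (u p) - f (v p)) := by
  have hD1 : ∀ p ∈ D, 1 ≤ p.1 := fun p hp => le_trans hT (hD p hp)
  have hf' : ContDiff ℝ (⊤ : ℕ∞) f := hf.of_le (by simp)
  have hus' : ContDiff ℝ (⊤ : ℕ∞) u := hus.of_le (by simp)
  have hvs' : ContDiff ℝ (⊤ : ℕ∞) v := hvs.of_le (by simp)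
  have hu1 : ∀ p ∈ D, |u p| ≤ 1 := fun p hp => by
    have := hbd p hp; have := abs_nonneg (v p); linarith
  have hv1 : ∀ p ∈ D, |v p| ≤ 1 := fun p hp => by
    have := hbd p hp; have := abs_nonneg (u p); linarith
  have hFu := comp2 hD1 hε hε1 hus' hu hu1 f hf' hf0 hf1
  have hFv := comp2 hD1 hε hε1 hvs' hv hv1 f hf' hf0 hf1
  intro L hL
  obtain ⟨C₁, hC₁, hb₁⟩ := hFu L hL
  obtain ⟨C₂, hC₂, hb₂⟩ := hFv L hL
  have heq := applyL_sub (F := fun p => f (u p)) (G := fun p => f (v p))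
    (hf'.comp hus') (hf'.comp hvs') L hL
  refine ⟨C₁ + C₂, by positivity, fun p hp => ?_⟩
  rw [heq]
  have ht := hD1 p hp
  have e₁ : p.1 ^ (-(2 * (m:ℝ)) + C₁ * ε) ≤ p.1 ^ (-(2 * (m:ℝ)) + (C₁ + C₂) * ε) :=
    Real.rpow_le_rpow_of_exponent_le ht (by nlinarith [mul_pos hC₂ hε])
  have e₂ : p.1 ^ (-(2 * (m:ℝ)) + C₂ * ε) ≤ p.1 ^ (-(2 * (m:ℝ)) + (C₁ + C₂) * ε) :=
    Real.rpow_le_rpow_of_exponent_le ht (by nlinarith [mul_pos hC₁ hε])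
  have h₁ := hb₁ p hp
  have h₂ := hb₂ p hp
  calc |applyL L (fun p => f (u p)) p - applyL L (fun p => f (v p)) p|
      ≤ |applyL L (fun p => f (u p)) p| + |applyL L (fun p => f (v p)) p| := abs_sub _ _
    _ ≤ C₁ * ε ^ (2 * n) * p.1 ^ (-(2 * (m:ℝ)) + (C₁ + C₂) * ε)
          + C₂ * ε ^ (2 * n) * p.1 ^ (-(2 * (m:ℝ)) + (C₁ + C₂) * ε) :=
        add_le_add (h₁.trans (mul_le_mul_of_nonneg_left e₁ (by positivity)))
          (h₂.trans (mul_le_mul_of_nonneg_left e₂ (by positivity)))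
    _ = (C₁ + C₂) * ε ^ (2 * n) * p.1 ^ (-(2 * (m:ℝ)) + (C₁ + C₂) * ε) := by ring

end
end

section
/- Along each backward characteristic line, the function q defined by (∂_t - ∂_r) q(t,r,ω) = μ(ε ln t - δ, q(t,r,ω), ω), q(t,0,ω) = -t, where μ(s,q,ω) = -2 exp((1/2) G(ω) A(q,ω) s), exists globally for all t > 0; i.e., the ODE system ż(τ) = μ(ε s(τ) - δ, z(τ), ω), ṡ(τ) = e^{-s(τ)} with data (z,s)(r+t) = (-(r+t), ln(r+t)) has a solution on (0, r+t]. -/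
open Set Real Filter Metric

/-- Auxiliary global existence result: the backward characteristic ODE
`ż(τ) = -2 exp(c A(z) (ε log τ - δ))` with `z(τ₀) = -τ₀` has a solution on `(0, τ₀]`,
for `A` smooth with compact support. -/
lemma ode_aux (c ε δ : ℝ) (A : ℝ → ℝ) (hA : ContDiff ℝ (⊤ : ℕ∞) A) (hcs : HasCompactSupport A)
    (τ0 : ℝ) (hτ0 : 0 < τ0) :
    ∃ z : ℝ → ℝ, z τ0 = -τ0 ∧ ∀ τ ∈ Set.Ioc (0:ℝ) τ0,
      HasDerivAt z (-2 * Real.exp (c * A (z τ) * (ε * Real.log τ - δ))) τ := by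
  classical
  obtain ⟨M₁, hM₁⟩ := hcs.exists_bound_of_continuous hA.continuous
  have hM₁0 : 0 ≤ M₁ := le_trans (norm_nonneg _) (hM₁ 0)
  obtain ⟨M₂, hM₂⟩ := hcs.deriv.exists_bound_of_continuous (hA.continuous_deriv (by simp))
  have hM₂0 : 0 ≤ M₂ := le_trans (norm_nonneg _) (hM₂ 0)
  set b : ℝ := τ0 + 1 with hb
  have hτ0b : τ0 < b := by simp [hb]
  set v : ℝ → ℝ → ℝ := fun τ x => -2 * Real.exp (c * A x * (ε * Real.log τ - δ)) with hv
  -- key: for every small `a`, existence and uniqueness of a solution on `Ioo a b`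
  have key : ∀ a, 0 < a → a < τ0 →
      (∃ f : ℝ → ℝ, f τ0 = -τ0 ∧ ∀ τ ∈ Set.Ioo a b, HasDerivAt f (v τ (f τ)) τ) ∧
      (∀ f g : ℝ → ℝ, (∀ τ ∈ Set.Ioo a b, HasDerivAt f (v τ (f τ)) τ) →
        (∀ τ ∈ Set.Ioo a b, HasDerivAt g (v τ (g τ)) τ) →
        f τ0 = g τ0 → Set.EqOn f g (Set.Ioo a b)) := by
    intro a ha0 haτ0
    have hab : a ≤ b := by linarith
    -- the time-clamped field
    set w : ℝ → ℝ → ℝ :=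
      fun τ x => -2 * Real.exp (c * A x * (ε * Real.log (max a (min τ b)) - δ)) with hw
    have hclamp : ∀ τ ∈ Set.Ioo a b, max a (min τ b) = τ := fun τ hτ => by
      rw [min_eq_left hτ.2.le, max_eq_right hτ.1.le]
    have hwv : ∀ τ ∈ Set.Ioo a b, w τ = v τ := by
      intro τ hτ
      funext x
      simp only [hw, hv, hclamp τ hτ]
    have hclpos : ∀ τ : ℝ, 0 < max a (min τ b) := fun τ =>
      lt_of_lt_of_le ha0 (le_max_left _ _)
    have hclmem : ∀ τ : ℝ, a ≤ max a (min τ b) ∧ max a (min τ b) ≤ b := fun τ =>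
      ⟨le_max_left _ _, max_le hab (min_le_right _ _)⟩
    set Λ : ℝ := |Real.log a| + |Real.log b| with hΛ
    have hlogcl : ∀ τ : ℝ, |Real.log (max a (min τ b))| ≤ Λ := by
      intro τ
      have h1 : Real.log a ≤ Real.log (max a (min τ b)) :=
        Real.log_le_log ha0 (hclmem τ).1
      have h2 : Real.log (max a (min τ b)) ≤ Real.log b :=
        Real.log_le_log (hclpos τ) (hclmem τ).2
      have h3 := neg_abs_le (Real.log a)
      have h4 := le_abs_self (Real.log b)
      have h5 := abs_nonneg (Real.log a)
      have h6 := abs_nonneg (Real.log b)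
      rw [abs_le]
      constructor <;> simp only [hΛ] <;> linarith
    set P : ℝ := |ε| * Λ + |δ| with hP
    have hΛ0 : 0 ≤ Λ := le_trans (abs_nonneg _) (hlogcl a)
    have hP0 : 0 ≤ P := by positivity
    have hLbd : ∀ τ : ℝ, |ε * Real.log (max a (min τ b)) - δ| ≤ P := by
      intro τ
      have h1 : |ε * Real.log (max a (min τ b))| ≤ |ε| * Λ := by
        rw [abs_mul]
        exact mul_le_mul_of_nonneg_left (hlogcl τ) (abs_nonneg ε)
      have h2 := abs_add_le (ε * Real.log (max a (min τ b))) (-δ)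
      rw [abs_neg] at h2
      rw [sub_eq_add_neg]
      simp only [hP]
      linarith
    have hexpbd : ∀ (τ x : ℝ), |c * A x * (ε * Real.log (max a (min τ b)) - δ)| ≤ |c| * M₁ * P := by
      intro τ x
      have h1 : |A x| ≤ M₁ := by simpa [Real.norm_eq_abs] using hM₁ x
      rw [abs_mul, abs_mul]
      exact mul_le_mul (mul_le_mul_of_nonneg_left h1 (abs_nonneg c)) (hLbd τ)
        (abs_nonneg _) (by positivity)
    set E0 : ℝ := |c| * M₁ * P with hE0
    have hE00 : 0 ≤ E0 := by positivity
    set Cb : ℝ := 2 * Real.exp E0 with hCb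
    have hCb0 : 0 < Cb := by positivity
    have hvb : ∀ (τ x : ℝ), ‖w τ x‖ ≤ Cb := by
      intro τ x
      have h1 : Real.exp (c * A x * (ε * Real.log (max a (min τ b)) - δ)) ≤ Real.exp E0 :=
        Real.exp_le_exp.mpr ((le_abs_self _).trans (hexpbd τ x))
      have h2 : ‖w τ x‖ = 2 * Real.exp (c * A x * (ε * Real.log (max a (min τ b)) - δ)) := by
        simp [hw, Real.norm_eq_abs, abs_mul, abs_of_pos (Real.exp_pos _)]
      rw [h2, hCb]
      linarith
    set Kr : ℝ := Cb * (|c| * M₂ * P) with hKr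
    have hKr0 : 0 ≤ Kr := by positivity
    set Kn : NNReal := Kr.toNNReal with hKn
    have hdiffw : ∀ (τ x : ℝ), HasDerivAt (w τ)
        (-2 * (Real.exp (c * A x * (ε * Real.log (max a (min τ b)) - δ)) *
          (c * deriv A x * (ε * Real.log (max a (min τ b)) - δ)))) x := by
      intro τ x
      have hAx : HasDerivAt A (deriv A x) x := (hA.differentiable (by simp) x).hasDerivAt
      have h1 : HasDerivAt (fun x => c * A x * (ε * Real.log (max a (min τ b)) - δ))
          (c * deriv A x * (ε * Real.log (max a (min τ b)) - δ)) x :=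
        (hAx.const_mul c).mul_const _
      exact h1.exp.const_mul (-2)
    have hlip : ∀ τ : ℝ, LipschitzWith Kn (w τ) := by
      intro τ
      apply lipschitzWith_of_nnnorm_deriv_le (fun x => (hdiffw τ x).differentiableAt)
      intro x
      rw [← NNReal.coe_le_coe, coe_nnnorm, hKn, Real.coe_toNNReal _ hKr0, (hdiffw τ x).deriv]
      have h1 : Real.exp (c * A x * (ε * Real.log (max a (min τ b)) - δ)) ≤ Real.exp E0 :=
        Real.exp_le_exp.mpr ((le_abs_self _).trans (hexpbd τ x))
      have h2 : |c * deriv A x * (ε * Real.log (max a (min τ b)) - δ)| ≤ |c| * M₂ * P := by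
        rw [abs_mul, abs_mul]
        have h3 : |deriv A x| ≤ M₂ := by simpa [Real.norm_eq_abs] using hM₂ x
        exact mul_le_mul (mul_le_mul_of_nonneg_left h3 (abs_nonneg c)) (hLbd τ)
          (abs_nonneg _) (by positivity)
      have h4 : ‖-2 * (Real.exp (c * A x * (ε * Real.log (max a (min τ b)) - δ)) *
          (c * deriv A x * (ε * Real.log (max a (min τ b)) - δ)))‖
          = 2 * (Real.exp (c * A x * (ε * Real.log (max a (min τ b)) - δ)) *
            |c * deriv A x * (ε * Real.log (max a (min τ b)) - δ)|) := by
        simp [Real.norm_eq_abs, abs_mul, abs_of_pos (Real.exp_pos _)]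
      rw [h4, hKr, hCb]
      have h5 := mul_le_mul h1 h2 (abs_nonneg _) (Real.exp_pos E0).le
      nlinarith
    -- Picard–Lindelöf data
    have hpl : IsPicardLindelof w (tmin := a) (tmax := b) ⟨τ0, haτ0.le, hτ0b.le⟩ (-τ0)
        ⟨Cb * max (b - τ0) (τ0 - a), mul_nonneg hCb0.le (le_trans (by linarith) (le_max_left _ _))⟩
        0 ⟨Cb, hCb0.le⟩ Kn :=
      { lipschitzOnWith := fun t _ => (hlip t).lipschitzOnWith
        continuousOn := by
          intro x _
          apply Continuous.continuousOn
          have hclc : Continuous fun τ : ℝ => max a (min τ b) :=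
            continuous_const.max (continuous_id.min continuous_const)
          have hlogc : Continuous fun τ : ℝ => Real.log (max a (min τ b)) := by
            apply Real.continuousOn_log.comp_continuous hclc
            intro τ
            simpa using (hclpos τ).ne'
          exact continuous_const.mul (Real.continuous_exp.comp
            (continuous_const.mul ((continuous_const.mul hlogc).sub continuous_const)))
        norm_le := fun t _ x _ => hvb t x
        mul_max_le := by simp; exact le_rfl }
    obtain ⟨f, hf0, hf⟩ := hpl.exists_eq_forall_mem_Icc_hasDerivWithinAt₀
    constructor
    · refine ⟨f, hf0, fun τ hτ => ?_⟩
      have h1 : HasDerivAt f (w τ (f τ)) τ :=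
        (hf τ (Set.Ioo_subset_Icc_self hτ)).hasDerivAt (Icc_mem_nhds hτ.1 hτ.2)
      rwa [hwv τ hτ] at h1
    · intro f g hfode hgode hfg
      exact ODE_solution_unique_of_mem_Ioo (s := fun _ => Set.univ)
        (fun t _ => (hlip t).lipschitzOnWith) ⟨haτ0, hτ0b⟩
        (fun t ht => ⟨by rw [hwv t ht]; exact hfode t ht, Set.mem_univ _⟩)
        (fun t ht => ⟨by rw [hwv t ht]; exact hgode t ht, Set.mem_univ _⟩) hfg
  -- glue the solutions
  set F : ℝ → ℝ → ℝ := fun a => if h : 0 < a ∧ a < τ0 then (key a h.1 h.2).1.choose else 0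
    with hF
  have hF0 : ∀ a, (h : 0 < a ∧ a < τ0) → F a τ0 = -τ0 ∧
      ∀ τ ∈ Set.Ioo a b, HasDerivAt (F a) (v τ (F a τ)) τ := by
    intro a h
    have := (key a h.1 h.2).1.choose_spec
    simpa only [hF, dif_pos h] using this
  refine ⟨fun τ => F (τ/2) τ, ?_, ?_⟩
  · exact (hF0 (τ0/2) ⟨by linarith, by linarith⟩).1
  · intro τ hτ
    have hτ4 : 0 < τ/4 ∧ τ/4 < τ0 := ⟨by linarith [hτ.1], by linarith [hτ.1, hτ.2]⟩
    -- local identification with F (τ/4)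
    have hlocal : ∀ τ' ∈ Set.Ioo (τ/2) (min (2*τ0) b), F (τ'/2) τ' = F (τ/4) τ' := by
      intro τ' hτ'
      have hτ'0 : 0 < τ' := lt_trans (by linarith [hτ.1]) hτ'.1
      have hτ'lt := lt_min_iff.mp hτ'.2
      have h1 : 0 < τ'/2 ∧ τ'/2 < τ0 := ⟨by linarith, by linarith [hτ'lt.1]⟩
      have huniq := (key (τ'/2) h1.1 h1.2).2 (F (τ'/2)) (F (τ/4))
        (fun s hs => (hF0 _ h1).2 s hs)
        (fun s hs => (hF0 _ hτ4).2 s ⟨lt_of_le_of_lt (by linarith [hτ'.1]) hs.1, hs.2⟩)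
        (((hF0 _ h1).1).trans ((hF0 _ hτ4).1).symm)
      exact huniq ⟨by linarith, hτ'lt.2⟩
    have hUmem : Set.Ioo (τ/2) (min (2*τ0) b) ∈ nhds τ :=
      Ioo_mem_nhds (by linarith [hτ.1])
        (lt_min (by linarith [hτ.1, hτ.2]) (by linarith [hτ.2]))
    have hEq : (fun τ' => F (τ'/2) τ') =ᶠ[nhds τ] F (τ/4) :=
      Filter.eventuallyEq_of_mem hUmem (fun τ' hτ' => hlocal τ' hτ')
    have hd : HasDerivAt (F (τ/4)) (v τ (F (τ/4) τ)) τ :=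
      (hF0 _ hτ4).2 τ ⟨by linarith [hτ.1], by linarith [hτ.2]⟩
    have hz : F (τ/2) τ = F (τ/4) τ :=
      hlocal τ ⟨by linarith [hτ.1],
        lt_min (by linarith [hτ.1, hτ.2]) (by linarith [hτ.2])⟩
    have := hd.congr_of_eventuallyEq hEq
    simp only [hv] at this ⊢
    rwa [← hz] at this

/-- Global existence along backward characteristics: the autonomous system
`ż(τ) = μ(ε s(τ) - δ, z(τ), ω)`, `ṡ(τ) = e^{-s(τ)}` with data
`(z,s)(r+t) = (-(r+t), ln(r+t))`, where
`μ(s,q,ω) = -2 exp((1/2) G(ω) A(q,ω) s)` and `A` is smooth with `A(q,ω) = 0`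
for `|q| > R`, has a solution on `(0, r+t]`. -/
theorem characteristic_ode_global_existence (R G : ℝ) (A : ℝ → ℝ)
    (hR : 1 ≤ R) (hA : ContDiff ℝ (⊤ : ℕ∞) A) (hsupp : ∀ q : ℝ, R < |q| → A q = 0)
    (ε δ : ℝ) (hε : 0 < ε) (hε1 : ε < 1) (hδ : 0 < δ) (hδ1 : δ < 1)
    (t r : ℝ) (ht : 0 < t) (hr : 0 ≤ r) :
    ∃ z s : ℝ → ℝ,
      z (r + t) = -(r + t) ∧ s (r + t) = Real.log (r + t) ∧
      ∀ τ ∈ Set.Ioc (0 : ℝ) (r + t),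
        HasDerivAt z (-2 * Real.exp ((1/2) * G * A (z τ) * (ε * s τ - δ))) τ ∧
        HasDerivAt s (Real.exp (-(s τ))) τ := by
  have hcs : HasCompactSupport A := by
    apply HasCompactSupport.intro (isCompact_Icc (a := -R) (b := R))
    intro q hq
    apply hsupp
    by_contra hle
    push_neg at hle
    exact hq (Set.mem_Icc.mpr (abs_le.mp hle))
  obtain ⟨z, hz0, hzd⟩ := ode_aux ((1/2)*G) ε δ A hA hcs (r+t) (by linarith)
  refine ⟨z, Real.log, hz0, rfl, fun τ hτ => ⟨?_, ?_⟩⟩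
  · exact hzd τ hτ
  · have h := Real.hasDerivAt_log (ne_of_gt hτ.1)
    rw [Real.exp_neg, Real.exp_log hτ.1]
    exact h
end

section
/- With μ(s,q,ω) = -2 exp((1/2)G(ω)A(q,ω)s) where A vanishes for |q| > R, and q(t,r,ω) solving (∂_t - ∂_r)q = μ(ε ln t - δ, q, ω) with q(t,0,ω) = -t: for t ≥ T_R sufficiently large, there exist 0 < t₀ < t₁ = (t + r + R)/2 such that along the characteristic τ ↦ q(τ, r + t - τ, ω), one has |q| ≤ R exactly for τ ∈ [t₀, t₁], q(τ, r+t-τ, ω) = R + 2(t₀ - τ) for τ ≤ t₀, and q(τ, r+t-τ, ω) = r + t - 2τ for τ ≥ t₁. In particular q(t,r,ω) = r - t whenever r ≤ t - R. -/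
open Set Filter Topology

set_option maxHeartbeats 1000000 in
/-- Structure of the optical function along characteristics: with
`μ(s,q) = -2 exp((1/2) G A(q) s)` (`A` supported in `[-R,R]`) and `q(t,r)`
solving `(∂_t - ∂_r) q = μ(ε ln t - δ, q)`, `q(t,0) = -t`, for `ε` small and
`t ≥ T_R` large there are `0 < t₀ < t₁ = (t+r+R)/2` such that along the
characteristic `τ ↦ q(τ, r+t-τ)` one has `|q| ≤ R` exactly on `[t₀,t₁]`,
`q = R + 2(t₀ - τ)` for `τ ≤ t₀`, and `q = r + t - 2τ` for `τ ≥ t₁`;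
in particular `q(t,r) = r - t` whenever `r ≤ t - R`. -/
theorem optical_function_structure (R G : ℝ) (A : ℝ → ℝ)
    (hR : 1 ≤ R) (hA : ContDiff ℝ (⊤ : ℕ∞) A) (hsupp : ∀ p : ℝ, R < |p| → A p = 0) :
    ∃ ε₀ > 0, ∃ T : ℝ, R ≤ T ∧
      ∀ ε δ : ℝ, 0 < ε → ε < ε₀ → 0 < δ → δ < 1 →
      ∀ q : ℝ → ℝ → ℝ,
        (∀ t : ℝ, 0 < t → q t 0 = -t) →
        (∀ t r τ : ℝ, 0 < τ →
          HasDerivAt (fun σ => q σ (r + t - σ))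
            (-2 * Real.exp ((1/2) * G * A (q τ (r + t - τ)) *
              (ε * Real.log τ - δ))) τ) →
        ∀ t r : ℝ, T ≤ t → 0 ≤ r →
          ∃ t₀ t₁ : ℝ, 0 < t₀ ∧ t₀ < t₁ ∧ t₁ = (t + r + R) / 2 ∧
            (∀ τ : ℝ, 0 < τ → (|q τ (r + t - τ)| ≤ R ↔ t₀ ≤ τ ∧ τ ≤ t₁)) ∧
            (∀ τ : ℝ, 0 < τ → τ ≤ t₀ → q τ (r + t - τ) = R + 2 * (t₀ - τ)) ∧
            (∀ τ : ℝ, t₁ ≤ τ → τ ≤ r + t → q τ (r + t - τ) = r + t - 2 * τ) ∧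
            (r ≤ t - R → q t r = r - t) := by
  -- a bound on |A|
  obtain ⟨C₀, hC₀⟩ : ∃ C₀ : ℝ, ∀ p : ℝ, |A p| ≤ C₀ := by
    have hcs : HasCompactSupport A := by
      apply HasCompactSupport.intro (isCompact_Icc (a := -R) (b := R))
      intro p hp
      apply hsupp
      simp only [mem_Icc, not_and_or, not_le] at hp
      rcases hp with h | h
      · rw [abs_of_neg (by linarith)]; linarith
      · rw [abs_of_pos (by linarith)]; linarith
    obtain ⟨C₀, hC₀⟩ := hcs.exists_bound_of_continuous hA.continuous
    exact ⟨C₀, fun p => by simpa [Real.norm_eq_abs] using hC₀ p⟩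
  set C : ℝ := max C₀ 0 with hCdef
  have hC : ∀ p : ℝ, |A p| ≤ C := fun p => le_trans (hC₀ p) (le_max_left _ _)
  have hCnn : 0 ≤ C := le_max_right _ _
  set K : ℝ := |G| * C / 2 with hKdef
  have hKnn : 0 ≤ K := by positivity
  have hexpK : 1 ≤ Real.exp K := Real.one_le_exp hKnn
  -- the key pointwise bound on the exponent
  have hxb : ∀ p s : ℝ, |(1/2) * G * A p * s| ≤ K * |s| := by
    intro p s
    calc |(1/2) * G * A p * s| = 1/2 * |G| * |A p| * |s| := by
          rw [abs_mul, abs_mul, abs_mul]; norm_num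
      _ ≤ 1/2 * |G| * C * |s| := by gcongr; exact hC p
      _ = K * |s| := by rw [hKdef]; ring
  set B : ℝ := 2 * R * Real.exp K + 1 with hBdef
  have hB3 : 3 ≤ B := by nlinarith
  have hBpos : 0 < B := by linarith
  refine ⟨1 / (2 * (K + 1)), by positivity, 2 * B ^ 2, by nlinarith, ?_⟩
  intro ε δ hε hεε₀ hδ hδ1 q hq0 hq' t r hTt hr
  have hKε : K * ε ≤ 1 / 2 := by
    have h1 : ε < 1 / (2 * (K + 1)) := hεε₀
    have h2 : 0 < K + 1 := by linarith
    calc K * ε ≤ K * (1 / (2 * (K + 1))) := by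
          apply mul_le_mul_of_nonneg_left (le_of_lt h1) hKnn
      _ = K / (2 * (K + 1)) := by ring
      _ ≤ 1 / 2 := by
          rw [div_le_div_iff₀ (by positivity) (by norm_num)]
          nlinarith
  set f : ℝ → ℝ := fun σ => q σ (r + t - σ) with hfdef
  have hf' : ∀ τ : ℝ, 0 < τ →
      HasDerivAt f (-2 * Real.exp ((1/2) * G * A (f τ) * (ε * Real.log τ - δ))) τ :=
    fun τ hτ => hq' t r τ hτ
  have hfc : ∀ τ : ℝ, 0 < τ → ContinuousAt f τ := fun τ hτ => (hf' τ hτ).continuousAt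
  set t₁ : ℝ := (t + r + R) / 2 with ht₁def
  have htT : 2 * B ^ 2 ≤ t := hTt
  have htpos : 0 < t := by nlinarith
  have ht₁B : B ^ 2 ≤ t₁ := by rw [ht₁def]; nlinarith
  have ht₁9 : 9 ≤ t₁ := by nlinarith
  have ht₁pos : 0 < t₁ := by linarith
  have hRt : R ≤ t := by nlinarith
  have ht₁le : t₁ ≤ r + t := by rw [ht₁def]; linarith
  have hrt : 0 < r + t := by linarith
  -- strict monotonicity
  have hanti : StrictAntiOn f (Ioi 0) := by
    apply strictAntiOn_of_deriv_neg (convex_Ioi 0)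
    · exact fun τ hτ => (hfc τ hτ).continuousWithinAt
    · intro τ hτ
      rw [interior_Ioi] at hτ
      rw [(hf' τ hτ).deriv]
      have := Real.exp_pos ((1/2) * G * A (f τ) * (ε * Real.log τ - δ))
      linarith
  have hmono : ∀ a b : ℝ, 0 < a → 0 < b → a ≤ b → f b ≤ f a := by
    intro a b ha hb hab
    rcases eq_or_lt_of_le hab with h | h
    · rw [h]
    · exact le_of_lt (hanti ha hb h)
  -- endpoint value
  have hend : f (r + t) = r + t - 2 * (r + t) := by
    show q (r + t) (r + t - (r + t)) = _
    rw [show r + t - (r + t) = (0:ℝ) by ring, hq0 (r + t) hrt]; ring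
  -- Step B : f is the line r + t - 2σ on [t₁, r+t]
  have hline : ∀ τ ∈ Icc t₁ (r + t), f τ = r + t - 2 * τ := by
    set S : Set ℝ := {τ | τ ∈ Icc t₁ (r + t) ∧ ∀ σ ∈ Icc τ (r + t), f σ = r + t - 2 * σ}
      with hSdef
    have hSrt : (r + t) ∈ S := by
      refine ⟨⟨ht₁le, le_refl _⟩, fun σ hσ => ?_⟩
      rw [le_antisymm hσ.2 hσ.1]; exact hend
    have hSne : S.Nonempty := ⟨_, hSrt⟩
    have hSbd : BddBelow S := ⟨t₁, fun x hx => hx.1.1⟩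
    set c : ℝ := sInf S with hcdef
    have hct₁ : t₁ ≤ c := le_csInf hSne (fun x hx => hx.1.1)
    have hcrt : c ≤ r + t := csInf_le hSbd hSrt
    have hcpos : 0 < c := lt_of_lt_of_le ht₁pos hct₁
    have hIoc : ∀ σ ∈ Ioc c (r + t), f σ = r + t - 2 * σ := by
      intro σ hσ
      obtain ⟨x, hxS, hxlt⟩ := exists_lt_of_csInf_lt hSne hσ.1
      exact hxS.2 σ ⟨le_of_lt hxlt, hσ.2⟩
    have hfc0 : f c = r + t - 2 * c := by
      rcases eq_or_lt_of_le hcrt with h | h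
      · rw [h]; exact hend
      · have hnb : 𝓝[Ioc c (r + t)] c = 𝓝[>] c := nhdsWithin_Ioc_eq_nhdsGT h
        have hmem : Ioc c (r + t) ∈ 𝓝[>] c := Ioc_mem_nhdsGT_of_mem ⟨le_refl c, h⟩
        have h1 : Tendsto f (𝓝[>] c) (𝓝 (f c)) :=
          ((hfc c hcpos).continuousWithinAt).tendsto
        have heq : f =ᶠ[𝓝[>] c] (fun σ => r + t - 2 * σ) :=
          Filter.eventuallyEq_of_mem hmem hIoc
        have h2 : Tendsto (fun σ : ℝ => r + t - 2 * σ) (𝓝[>] c) (𝓝 (r + t - 2 * c)) :=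
          ((continuous_const.sub (continuous_const.mul continuous_id)).tendsto c).mono_left
            nhdsWithin_le_nhds
        exact tendsto_nhds_unique (h1.congr' heq) h2
    have hcS : c ∈ S := by
      refine ⟨⟨hct₁, hcrt⟩, fun σ hσ => ?_⟩
      rcases eq_or_lt_of_le hσ.1 with h | h
      · rw [← h]; exact hfc0
      · exact hIoc σ ⟨h, hσ.2⟩
    have hc : c ≤ t₁ := by
      by_contra hlt
      push_neg at hlt
      have hfclt : f c < -R := by rw [hfc0, ht₁def] at *; linarith
      have hev : ∀ᶠ σ in 𝓝 c, f σ < -R :=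
        (hfc c hcpos).eventually_lt continuousAt_const hfclt
      obtain ⟨η, hη, hball⟩ := Metric.eventually_nhds_iff.1 hev
      set a : ℝ := max t₁ (max (c - η / 2) (c / 2)) with hadef
      have hat₁ : t₁ ≤ a := le_max_left _ _
      have hac : a < c := by
        apply max_lt hlt (max_lt (by linarith) (by linarith))
      have hapos : 0 < a := lt_of_lt_of_le ht₁pos hat₁
      have hlt' : ∀ σ ∈ Icc a c, f σ < -R := by
        intro σ hσ
        apply hball
        have h1 : c - η / 2 ≤ a := le_trans (le_max_left _ _) (le_max_right _ _)
        rw [Real.dist_eq, abs_sub_lt_iff]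
        constructor <;> [linarith [hσ.2]; linarith [hσ.1]]
      -- on [a, c] the derivative is exactly -2
      have hgd : ∀ x ∈ Ico a c, HasDerivWithinAt (fun σ => f σ + 2 * σ) 0 (Ici x) x := by
        intro x hx
        have hxpos : 0 < x := lt_of_lt_of_le hapos hx.1
        have hfx : f x < -R := hlt' x ⟨hx.1, le_of_lt hx.2⟩
        have hAx : A (f x) = 0 := by
          apply hsupp
          rw [abs_of_neg (by linarith)]
          linarith
        have h1 := hf' x hxpos
        rw [hAx] at h1
        simp only [mul_zero, zero_mul, Real.exp_zero, mul_one] at h1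
        have h2 : HasDerivAt (fun σ : ℝ => f σ + 2 * σ) (-2 + 2 * 1) x :=
          h1.add ((hasDerivAt_id x).const_mul 2)
        norm_num at h2
        exact h2.hasDerivWithinAt
      have hgc : ContinuousOn (fun σ => f σ + 2 * σ) (Icc a c) := by
        intro x hx
        exact (((hfc x (lt_of_lt_of_le hapos hx.1)).add
          (continuousAt_const.mul continuousAt_id)).continuousWithinAt)
      have hconst := constant_of_has_deriv_right_zero hgc hgd
      have hgac : f c + 2 * c = f a + 2 * a :=
        hconst c ⟨le_of_lt hac, le_refl c⟩
      have haS : a ∈ S := by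
        refine ⟨⟨hat₁, le_trans (le_of_lt hac) hcrt⟩, fun σ hσ => ?_⟩
        rcases le_or_gt σ c with h | h
        · have := hconst σ ⟨hσ.1, h⟩
          have h2 := hconst c ⟨le_of_lt hac, le_refl c⟩
          rw [hfc0] at h2
          linarith
        · exact hIoc σ ⟨h, hσ.2⟩
      have := csInf_le hSbd haS
      rw [← hcdef] at this
      linarith
    intro τ hτ
    exact hcS.2 τ ⟨le_trans hc hτ.1, hτ.2⟩
  have hft₁ : f t₁ = -R := by
    rw [hline t₁ ⟨le_refl _, ht₁le⟩, ht₁def]; ring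
  have h1t₁ : (1:ℝ) ≤ t₁ := by linarith
  -- Step : f 1 > R
  have hf1 : R < f 1 := by
    by_contra h
    push_neg at h
    have hbox : ∀ τ ∈ Icc (1:ℝ) t₁, -R ≤ f τ ∧ f τ ≤ R := by
      intro τ hτ
      have hτpos : 0 < τ := by linarith [hτ.1]
      constructor
      · have := hmono τ t₁ hτpos ht₁pos hτ.2
        rw [hft₁] at this; linarith
      · have := hmono 1 τ one_pos hτpos hτ.1
        linarith
    set L : ℝ := Real.log t₁ with hLdef
    have hLnn : 0 ≤ L := Real.log_nonneg h1t₁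
    set E : ℝ := Real.exp (-K - K * ε * L) with hEdef
    have hEpos : 0 < E := Real.exp_pos _
    -- F is antitone on [1, t₁]
    have hFanti : AntitoneOn (fun σ => f σ + 2 * E * σ) (Icc 1 t₁) := by
      apply antitoneOn_of_deriv_nonpos (convex_Icc 1 t₁)
      · intro x hx
        exact (((hfc x (by linarith [hx.1])).add
          (continuousAt_const.mul continuousAt_id)).continuousWithinAt)
      · intro x hx
        rw [interior_Icc] at hx
        have hxpos : 0 < x := by linarith [hx.1]
        exact ((hf' x hxpos).add
          ((hasDerivAt_id x).const_mul (2 * E))).differentiableAt.differentiableWithinAt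
      · intro x hx
        rw [interior_Icc] at hx
        have hxpos : 0 < x := by linarith [hx.1]
        have hd : HasDerivAt (fun σ => f σ + 2 * E * σ)
            (-2 * Real.exp ((1/2) * G * A (f x) * (ε * Real.log x - δ)) + 2 * E * 1) x :=
          (hf' x hxpos).add ((hasDerivAt_id x).const_mul (2 * E))
        rw [hd.deriv]
        -- exponent lower bound
        have hlx : 0 ≤ Real.log x := Real.log_nonneg (le_of_lt hx.1)
        have hlxL : Real.log x ≤ L := Real.log_le_log hxpos (le_of_lt hx.2)
        have habs := hxb (f x) (ε * Real.log x - δ)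
        have habs2 : |ε * Real.log x - δ| ≤ ε * Real.log x + δ := by
          have h1 : |ε * Real.log x - δ| ≤ |ε * Real.log x| + |δ| := abs_sub _ _
          rw [abs_of_nonneg (mul_nonneg (le_of_lt hε) hlx), abs_of_nonneg (le_of_lt hδ)] at h1
          exact h1
        have hX : -K - K * ε * L ≤ (1/2) * G * A (f x) * (ε * Real.log x - δ) := by
          have h1 : K * |ε * Real.log x - δ| ≤ K * (ε * Real.log x + δ) :=
            mul_le_mul_of_nonneg_left habs2 hKnn
          have h2 : -( K * (ε * Real.log x + δ)) ≤ (1/2) * G * A (f x) * (ε * Real.log x - δ) := by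
            have := neg_abs_le ((1/2) * G * A (f x) * (ε * Real.log x - δ))
            linarith
          have h3 : K * (ε * Real.log x + δ) ≤ K + K * ε * L := by
            have : K * (ε * Real.log x) ≤ K * (ε * L) := by
              apply mul_le_mul_of_nonneg_left _ hKnn
              exact mul_le_mul_of_nonneg_left hlxL (le_of_lt hε)
            nlinarith
          linarith
        have hEle : E ≤ Real.exp ((1/2) * G * A (f x) * (ε * Real.log x - δ)) := by
          rw [hEdef]; exact Real.exp_le_exp.2 hX
        have := Real.exp_pos ((1/2) * G * A (f x) * (ε * Real.log x - δ))
        linarith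
    have hF := hFanti ⟨le_refl 1, h1t₁⟩ ⟨h1t₁, le_refl t₁⟩ h1t₁
    simp only at hF
    -- hF : f t₁ + 2*E*t₁ ≤ f 1 + 2*E*1
    have hkey : E * (t₁ - 1) ≤ R := by
      rw [hft₁] at hF; nlinarith
    -- lower bound for E * (t₁ - 1)
    have e0 : Real.exp (-(K * ε) * L) * t₁ = Real.exp ((1 - K * ε) * L) := by
      rw [← Real.exp_log ht₁pos, ← hLdef, ← Real.exp_add]
      ring_nf
    have e2 : Real.exp ((1/2) * L) ≤ Real.exp ((1 - K * ε) * L) :=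
      Real.exp_le_exp.2 (by nlinarith)
    have e3 : B ≤ Real.exp ((1/2) * L) := by
      have hlog : Real.log (B ^ 2) ≤ L := Real.log_le_log (by positivity) ht₁B
      have hlB : Real.log (B ^ 2) = 2 * Real.log B := by
        rw [Real.log_pow]; push_cast; ring
      calc B = Real.exp (Real.log B) := (Real.exp_log hBpos).symm
        _ ≤ Real.exp ((1/2) * L) := Real.exp_le_exp.2 (by linarith)
    have e4 : E = Real.exp (-K) * Real.exp (-(K * ε) * L) := by
      rw [hEdef, ← Real.exp_add]; ring_nf
    have e5 : Real.exp (-K) * Real.exp K = 1 := by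
      rw [← Real.exp_add]; simp
    have e6 : 0 < Real.exp (-K) := Real.exp_pos _
    have e7 : 0 < Real.exp (-(K * ε) * L) := Real.exp_pos _
    -- combine: E * (t₁ - 1) ≥ exp(-K) * exp((1-Kε)L) / 2 ≥ exp(-K) * B / 2 > R
    have h8 : t₁ / 2 ≤ t₁ - 1 := by linarith
    have h9 : Real.exp (-K) * Real.exp ((1 - K * ε) * L) / 2 ≤ E * (t₁ - 1) := by
      rw [e4, ← e0]
      have : Real.exp (-K) * Real.exp (-(K * ε) * L) * (t₁ / 2) ≤
          Real.exp (-K) * Real.exp (-(K * ε) * L) * (t₁ - 1) := by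
        apply mul_le_mul_of_nonneg_left h8 (by positivity)
      nlinarith
    have hEB : 2 * R < Real.exp (-K) * B := by
      have h11 : Real.exp (-K) * B = 2 * R + Real.exp (-K) := by
        rw [hBdef]; linear_combination 2 * R * e5
      linarith
    have hfin : Real.exp (-K) * B ≤ 2 * (E * (t₁ - 1)) := by
      calc Real.exp (-K) * B ≤ Real.exp (-K) * Real.exp ((1 - K * ε) * L) :=
            mul_le_mul_of_nonneg_left (le_trans e3 e2) (le_of_lt e6)
        _ = Real.exp (-K) * (Real.exp (-(K * ε) * L) * t₁) := by rw [e0]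
        _ ≤ Real.exp (-K) * (Real.exp (-(K * ε) * L) * (2 * (t₁ - 1))) := by
            apply mul_le_mul_of_nonneg_left _ (le_of_lt e6)
            apply mul_le_mul_of_nonneg_left _ (le_of_lt e7)
            linarith
        _ = 2 * (E * (t₁ - 1)) := by rw [e4]; ring
    linarith
  -- Step : t₀ via IVT
  have hcont1 : ContinuousOn f (Icc 1 t₁) := fun x hx =>
    (hfc x (by linarith [hx.1])).continuousWithinAt
  have hRmem : R ∈ Icc (f t₁) (f 1) := ⟨by rw [hft₁]; linarith, le_of_lt hf1⟩
  obtain ⟨t₀, ht₀mem, ht₀⟩ := intermediate_value_Icc' h1t₁ hcont1 hRmem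
  have ht₀pos : 0 < t₀ := by linarith [ht₀mem.1]
  have ht₀lt : t₀ < t₁ := by
    rcases eq_or_lt_of_le ht₀mem.2 with h | h
    · exfalso; rw [h, hft₁] at ht₀; linarith
    · exact h
  -- Step : explicit form before t₀
  have hbefore : ∀ τ : ℝ, 0 < τ → τ ≤ t₀ → f τ = R + 2 * (t₀ - τ) := by
    intro τ hτpos hτ
    rcases eq_or_lt_of_le hτ with h | h
    · rw [h, ht₀]; ring
    · have hgd : ∀ x ∈ Ico τ t₀, HasDerivWithinAt (fun σ => f σ + 2 * σ) 0 (Ici x) x := by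
        intro x hx
        have hxpos : 0 < x := lt_of_lt_of_le hτpos hx.1
        have hfx : R < f x := by
          have := hanti (mem_Ioi.2 hxpos) (mem_Ioi.2 ht₀pos) hx.2
          rw [ht₀] at this; exact this
        have hAx : A (f x) = 0 := by
          apply hsupp
          rw [abs_of_pos (by linarith)]; exact hfx
        have h1 := hf' x hxpos
        rw [hAx] at h1
        simp only [mul_zero, zero_mul, Real.exp_zero, mul_one] at h1
        have h2 : HasDerivAt (fun σ : ℝ => f σ + 2 * σ) (-2 + 2 * 1) x :=
          h1.add ((hasDerivAt_id x).const_mul 2)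
        norm_num at h2
        exact h2.hasDerivWithinAt
      have hgc : ContinuousOn (fun σ => f σ + 2 * σ) (Icc τ t₀) := fun x hx =>
        (((hfc x (lt_of_lt_of_le hτpos hx.1)).add
          (continuousAt_const.mul continuousAt_id)).continuousWithinAt)
      have hconst := constant_of_has_deriv_right_zero hgc hgd
      have := hconst t₀ ⟨le_of_lt h, le_refl t₀⟩
      rw [ht₀] at this
      linarith
  refine ⟨t₀, t₁, ht₀pos, ht₀lt, rfl, ?_, ?_, ?_, ?_⟩
  · -- the iff
    intro τ hτpos
    constructor
    · intro habs
      rw [abs_le] at habs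
      constructor
      · by_contra hlt
        push_neg at hlt
        have := hanti (mem_Ioi.2 hτpos) (mem_Ioi.2 ht₀pos) hlt
        rw [ht₀] at this
        have := habs.2
        change f τ ≤ R at this
        linarith
      · by_contra hlt
        push_neg at hlt
        have := hanti (mem_Ioi.2 ht₁pos) (mem_Ioi.2 (by linarith : (0:ℝ) < τ)) hlt
        rw [hft₁] at this
        have h2 := habs.1
        change -R ≤ f τ at h2
        linarith
    · rintro ⟨h₀, h₁⟩
      rw [abs_le]
      constructor
      · have := hmono τ t₁ hτpos ht₁pos h₁
        rw [hft₁] at this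
        exact this
      · have := hmono t₀ τ ht₀pos hτpos h₀
        rw [ht₀] at this
        exact this
  · exact fun τ hτpos hτ => hbefore τ hτpos hτ
  · exact fun τ h₁ h₂ => hline τ ⟨h₁, h₂⟩
  · intro hrR
    have h1 : t₁ ≤ t := by rw [ht₁def]; linarith
    have h2 := hline t ⟨h1, by linarith⟩
    have h3 : q t (r + t - t) = r + t - 2 * t := h2
    rw [show r + t - t = r by ring] at h3
    rw [h3]; ring
end

section
/- Under the above construction, for all (t,r,ω) with t ≥ T_R sufficiently large, one has t₁ - t₀ = O((t+r)^{Cε}) and |q(t,r,ω) - (r - t)| = O((t+r)^{Cε}); moreover if |q(t,r,ω)| ≤ R then -R ≤ r - t ≲ t^{Cε}, so t ∼ r on the region D = {t ≥ T_R, |q(t,r,ω)| ≤ R}. -/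
open Real Set Filter Topology

/-- If the derivative of `f` is `-2` wherever `R < |f|`, and near/left of `b` the
function stays outside the slab, and the affine extrapolation from `b` with slope `-2`
stays outside the slab on `(a,b)`, then `f` is exactly affine with slope `-2` on `[a,b]`. -/
lemma const_slope (R : ℝ) (f d : ℝ → ℝ)
    (hf : ∀ τ : ℝ, 0 < τ → HasDerivAt f (d τ) τ)
    (hd : ∀ τ : ℝ, 0 < τ → R < |f τ| → d τ = -2)
    (a b : ℝ) (ha : 0 < a) (hab : a ≤ b)
    (hline : ∀ σ : ℝ, a < σ → σ < b → R < |f b + 2 * (b - σ)|)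
    (hb : ∀ᶠ σ in 𝓝[<] b, R < |f σ|) :
    ∀ σ ∈ Icc a b, f σ = f b + 2 * (b - σ) := by
  set L : ℝ → ℝ := fun σ => f b + 2 * (b - σ) with hL
  set S : Set ℝ := {τ | τ ∈ Icc a b ∧ ∀ σ ∈ Icc τ b, f σ = L σ} with hSdef
  have hbS : b ∈ S := by
    refine ⟨⟨hab, le_refl b⟩, ?_⟩
    intro σ hσ
    have hσb : σ = b := le_antisymm hσ.2 hσ.1
    simp [hσb, hL]
  have hSne : S.Nonempty := ⟨b, hbS⟩
  have hSbdd : BddBelow S := ⟨a, fun τ hτ => hτ.1.1⟩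
  set u := sInf S with hu
  have hau : a ≤ u := le_csInf hSne fun τ hτ => hτ.1.1
  have hub : u ≤ b := csInf_le hSbdd hbS
  have hu0 : 0 < u := lt_of_lt_of_le ha hau
  have key : ∀ σ, u < σ → σ ≤ b → f σ = L σ := by
    intro σ h1 h2
    obtain ⟨τ, hτS, hτσ⟩ := exists_lt_of_csInf_lt hSne h1
    exact hτS.2 σ ⟨le_of_lt hτσ, h2⟩
  have hfu : f u = L u := by
    rcases eq_or_lt_of_le hub with h | h
    · simp [h, hL]
    · have hcf : ContinuousAt f u := (hf u hu0).differentiableAt.continuousAt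
      have h1 : Tendsto f (𝓝[>] u) (𝓝 (f u)) := hcf.tendsto.mono_left nhdsWithin_le_nhds
      have hcL : ContinuousAt L u := by simp only [hL]; fun_prop
      have h2 : Tendsto f (𝓝[>] u) (𝓝 (L u)) := by
        refine (hcL.tendsto.mono_left nhdsWithin_le_nhds).congr' ?_
        filter_upwards [Ioc_mem_nhdsGT h] with σ hσ
        exact (key σ hσ.1 hσ.2).symm
      exact tendsto_nhds_unique h1 h2
  have hua : u = a := by
    by_contra hne
    have haltu : a < u := lt_of_le_of_ne hau (Ne.symm hne)
    have hslab : ∃ w, a ≤ w ∧ w < u ∧ ∀ σ, w < σ → σ < b → R < |f σ| := by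
      rcases eq_or_lt_of_le hub with hueqb | hultb
      · obtain ⟨l, hl, hsub⟩ := mem_nhdsLT_iff_exists_Ioo_subset.mp hb
        refine ⟨max a l, le_max_left _ _, ?_, ?_⟩
        · rw [hueqb]; exact max_lt (haltu.trans_le hub) hl
        · intro σ h1 h2
          exact hsub ⟨(le_max_right a l).trans_lt h1, h2⟩
      · have hfuR : R < |f u| := by rw [hfu]; exact hline u haltu hultb
        have hcf : ContinuousAt (fun σ => |f σ|) u :=
          ((hf u hu0).differentiableAt.continuousAt).abs
        have hev : ∀ᶠ σ in 𝓝 u, R < |f σ| := hcf.tendsto.eventually (eventually_gt_nhds hfuR)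
        obtain ⟨η, hη, hball⟩ := Metric.eventually_nhds_iff.mp hev
        refine ⟨max a (u - η/2), le_max_left _ _, max_lt haltu (by linarith), ?_⟩
        intro σ h1 h2
        rcases le_or_gt σ u with hσu | hσu
        · apply hball
          have h3 : u - η/2 < σ := (le_max_right _ _).trans_lt h1
          rw [Real.dist_eq, abs_sub_lt_iff]
          constructor <;> linarith
        · rw [key σ hσu h2.le]
          exact hline σ (haltu.trans hσu) h2
    obtain ⟨w, hw1, hw2, hw3⟩ := hslab
    have hwpos : 0 < w := lt_of_lt_of_le ha hw1
    have hwb : w ≤ b := (hw2.trans_le hub).le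
    have hgder : ∀ σ ∈ Ioo w b, HasDerivAt (fun σ => f σ + 2 * σ) 0 σ := by
      intro σ hσ
      have hσ0 : 0 < σ := hwpos.trans hσ.1
      have hd2 : d σ = -2 := hd σ hσ0 (hw3 σ hσ.1 hσ.2)
      have h := (hf σ hσ0).add ((hasDerivAt_id σ).const_mul 2)
      rw [hd2] at h
      have : (-2 : ℝ) + 2 * 1 = 0 := by norm_num
      rw [this] at h
      exact h
    have hgcont : ContinuousOn (fun σ => f σ + 2 * σ) (Icc w b) := by
      intro x hx
      exact (((hf x (hwpos.trans_le hx.1)).differentiableAt.continuousAt).add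
        (by fun_prop)).continuousWithinAt
    have hgdiff : DifferentiableOn ℝ (fun σ => f σ + 2 * σ) (interior (Icc w b)) := by
      rw [interior_Icc]
      exact fun x hx => (hgder x hx).differentiableAt.differentiableWithinAt
    have hgmono : MonotoneOn (fun σ => f σ + 2 * σ) (Icc w b) := by
      apply monotoneOn_of_deriv_nonneg (convex_Icc w b) hgcont hgdiff
      intro x hx
      rw [interior_Icc] at hx
      rw [(hgder x hx).deriv]
    have hganti : AntitoneOn (fun σ => f σ + 2 * σ) (Icc w b) := by
      apply antitoneOn_of_deriv_nonpos (convex_Icc w b) hgcont hgdiff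
      intro x hx
      rw [interior_Icc] at hx
      rw [(hgder x hx).deriv]
    have hwS : w ∈ S := by
      refine ⟨⟨hw1, hwb⟩, ?_⟩
      intro σ hσ
      have hbmem : b ∈ Icc w b := ⟨hwb, le_refl b⟩
      have h1 := hgmono hσ hbmem hσ.2
      have h2 := hganti hσ hbmem hσ.2
      have h3 : f σ + 2 * σ = f b + 2 * b := le_antisymm h1 h2
      simp only [hL]
      linarith
    have : u ≤ w := csInf_le hSbdd hwS
    linarith
  intro σ hσ
  rcases eq_or_lt_of_le hσ.1 with h | h
  · rw [← h]; rw [hua] at hfu; exact hfu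
  · exact key σ (by rw [hua]; exact h) hσ.2

/-- Two-sided mean value bounds from two-sided derivative bounds. -/
lemma deriv_between (f d : ℝ → ℝ) (lo hi a b : ℝ) (h0 : 0 < a)
    (hf : ∀ τ : ℝ, 0 < τ → HasDerivAt f (d τ) τ)
    (hbound : ∀ τ : ℝ, a < τ → τ < b → lo ≤ d τ ∧ d τ ≤ hi) :
    ∀ σ τ : ℝ, a ≤ σ → σ ≤ τ → τ ≤ b →
      lo * (τ - σ) ≤ f τ - f σ ∧ f τ - f σ ≤ hi * (τ - σ) := by
  intro σ τ hσ hστ hτ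
  have hcont : ContinuousOn f (Icc a b) := fun x hx =>
    ((hf x (h0.trans_le hx.1)).differentiableAt.continuousAt).continuousWithinAt
  have h1 : σ ∈ Icc a b := ⟨hσ, hστ.trans hτ⟩
  have h2 : τ ∈ Icc a b := ⟨hσ.trans hστ, hτ⟩
  constructor
  · have hmono : MonotoneOn (fun ρ => f ρ - lo * ρ) (Icc a b) := by
      apply monotoneOn_of_deriv_nonneg (convex_Icc a b) (hcont.sub (by fun_prop))
      · rw [interior_Icc]
        intro x hx
        exact ((hf x (h0.trans hx.1)).sub
          ((hasDerivAt_id x).const_mul lo)).differentiableAt.differentiableWithinAt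
      · intro x hx
        rw [interior_Icc] at hx
        have h := (hf x (h0.trans hx.1)).sub ((hasDerivAt_id x).const_mul lo)
        simp only [id_eq] at h
        rw [h.deriv]
        have := (hbound x hx.1 hx.2).1
        linarith [this]
    have h3 := hmono h1 h2 hστ
    simp only at h3
    nlinarith [h3]
  · have hanti : AntitoneOn (fun ρ => f ρ - hi * ρ) (Icc a b) := by
      apply antitoneOn_of_deriv_nonpos (convex_Icc a b) (hcont.sub (by fun_prop))
      · rw [interior_Icc]
        intro x hx
        exact ((hf x (h0.trans hx.1)).sub
          ((hasDerivAt_id x).const_mul hi)).differentiableAt.differentiableWithinAt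
      · intro x hx
        rw [interior_Icc] at hx
        have h := (hf x (h0.trans hx.1)).sub ((hasDerivAt_id x).const_mul hi)
        simp only [id_eq] at h
        rw [h.deriv]
        have := (hbound x hx.1 hx.2).2
        linarith [this]
    have h3 := hanti h1 h2 hστ
    simp only at h3
    nlinarith [h3]

set_option maxHeartbeats 1000000 in
/-- Estimates for the optical function: in the setting of the transport
equation `(∂_t - ∂_r) q = μ(ε ln t - δ, q)`, `q(t,0) = -t` with
`μ(s,q) = -2 exp((1/2) G A(q) s)` and `supp A ⊆ [-R,R]`, for `ε` small and
`t ≥ T_R` large one has `t₁ - t₀ = O((t+r)^{Cε})` for the entry/exit times of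
the slab `|q| ≤ R`, `|q(t,r) - (r-t)| = O((t+r)^{Cε})`, and if `|q(t,r)| ≤ R`
then `-R ≤ r - t ≲ t^{Cε}` (so `t ∼ r` on `D`). -/
theorem optical_function_estimates (R G : ℝ) (A : ℝ → ℝ)
    (hR : 1 ≤ R) (hA : ContDiff ℝ (⊤ : ℕ∞) A) (hsupp : ∀ p : ℝ, R < |p| → A p = 0) :
    ∃ ε₀ > 0, ∃ C > 0, ∃ T : ℝ, R ≤ T ∧
      ∀ ε δ : ℝ, 0 < ε → ε < ε₀ → 0 < δ → δ < 1 →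
      ∀ q : ℝ → ℝ → ℝ,
        (∀ t : ℝ, 0 < t → q t 0 = -t) →
        (∀ t r τ : ℝ, 0 < τ →
          HasDerivAt (fun σ => q σ (r + t - σ))
            (-2 * Real.exp ((1/2) * G * A (q τ (r + t - τ)) *
              (ε * Real.log τ - δ))) τ) →
        ∀ t r : ℝ, T ≤ t → 0 ≤ r →
          (∃ t₀ t₁ : ℝ, 0 < t₀ ∧ t₀ ≤ t₁ ∧ t₁ = (t + r + R) / 2 ∧
            (∀ τ : ℝ, 0 < τ → (|q τ (r + t - τ)| ≤ R ↔ t₀ ≤ τ ∧ τ ≤ t₁)) ∧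
            t₁ - t₀ ≤ C * (t + r) ^ (C * ε)) ∧
          |q t r - (r - t)| ≤ C * (t + r) ^ (C * ε) ∧
          (|q t r| ≤ R → -R ≤ r - t ∧ r - t ≤ C * t ^ (C * ε)) := by
  -- a global bound for `(1/2) * G * A`
  obtain ⟨M₁, hM₁⟩ := (isCompact_Icc : IsCompact (Icc (-R) R)).exists_bound_of_continuousOn
    hA.continuous.continuousOn
  set M₂ := max M₁ 0 with hM₂def
  clear_value M₂
  have hM₂0 : 0 ≤ M₂ := by rw [hM₂def]; exact le_max_right _ _
  have hM₂ : ∀ p, |A p| ≤ M₂ := by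
    intro p
    rcases le_or_gt |p| R with h | h
    · have hp := hM₁ p (by rw [mem_Icc]; exact abs_le.mp h)
      rw [Real.norm_eq_abs] at hp
      rw [hM₂def]
      exact hp.trans (le_max_left _ _)
    · rw [hsupp p h, abs_zero]; exact hM₂0
  set M₀ := 1 + |G| * M₂ with hM₀def
  clear_value M₀
  have hM₀1 : 1 ≤ M₀ := by nlinarith [abs_nonneg G, hM₂0, mul_nonneg (abs_nonneg G) hM₂0]
  have hM₀ : ∀ p : ℝ, |(1/2 : ℝ) * G * A p| ≤ M₀ := by
    intro p
    rw [abs_mul, abs_mul, show |(1/2 : ℝ)| = 1/2 from by norm_num]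
    have h2 := mul_le_mul_of_nonneg_left (hM₂ p) (abs_nonneg G)
    rw [hM₀def]
    nlinarith [abs_nonneg G, abs_nonneg (A p), mul_nonneg (abs_nonneg G) hM₂0]
  set K₀ := 8 * R * Real.exp M₀ with hK₀def
  clear_value K₀
  have hexpM₀ : 1 ≤ Real.exp M₀ := Real.one_le_exp (by linarith)
  have hK₀R : 8 * R ≤ K₀ := by rw [hK₀def]; nlinarith [hR]
  have hK₀8 : 8 ≤ K₀ := by linarith
  have h64R : 64 * R ^ 2 ≤ K₀ ^ 2 := by
    nlinarith [mul_self_le_mul_self (show (0:ℝ) ≤ 8 * R by linarith) hK₀R]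
  have hRsq : R ≤ R ^ 2 := by nlinarith [hR]
  refine ⟨1 / (4 * M₀), div_pos one_pos (by linarith), M₀ + K₀, by linarith, K₀ ^ 2,
    by nlinarith [h64R, hRsq], ?_⟩
  intro ε δ hε hεε₀ hδ0 hδ1 q hq0 hqd t r ht hr
  set c := t + r with hcdef
  clear_value c
  have hcT : K₀ ^ 2 ≤ c := by rw [hcdef]; linarith
  have hc64 : (64:ℝ) ≤ c := by nlinarith [hK₀8, hcT]
  have hc1 : (1:ℝ) ≤ c := by linarith
  have hc0 : (0:ℝ) < c := by linarith
  have ht64 : (64:ℝ) ≤ t := by nlinarith [hK₀8, ht]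
  have ht1 : (1:ℝ) ≤ t := by linarith
  have htc : t ≤ c := by rw [hcdef]; linarith
  have hRc : R < c := by nlinarith [h64R, hRsq, hcT]
  -- the function along the characteristic and its derivative
  set f : ℝ → ℝ := fun σ => q σ (r + t - σ) with hfdef
  clear_value f
  set d : ℝ → ℝ := fun τ => -2 * Real.exp ((1/2) * G * A (f τ) * (ε * Real.log τ - δ)) with hddef
  clear_value d
  have hfd : ∀ τ : ℝ, 0 < τ → HasDerivAt f (d τ) τ := by
    intro τ hτ
    rw [hddef, hfdef]
    exact hqd t r τ hτ
  have hd2 : ∀ τ : ℝ, 0 < τ → R < |f τ| → d τ = -2 := by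
    intro τ _ h
    have h0 : A (f τ) = 0 := hsupp (f τ) h
    simp only [hddef, h0, mul_zero, zero_mul, Real.exp_zero, mul_one]
  have hfc : f c = -c := by
    simp only [hfdef]
    rw [show r + t - c = 0 from by rw [hcdef]; ring]
    exact hq0 c hc0
  have hanti : StrictAntiOn f (Ioi 0) := by
    apply strictAntiOn_of_deriv_neg (convex_Ioi 0)
    · exact fun x hx => ((hfd x hx).differentiableAt.continuousAt).continuousWithinAt
    · intro x hx
      rw [interior_Ioi] at hx
      rw [(hfd x hx).deriv]
      have := Real.exp_pos ((1/2) * G * A (f x) * (ε * Real.log x - δ))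
      simp only [hddef]
      linarith
  -- uniform derivative bounds on (1, c)
  set B := M₀ * (ε * Real.log c + 1) with hBdef
  clear_value B
  have hlogc : 0 ≤ Real.log c := Real.log_nonneg hc1
  have hexpB1 : (0:ℝ) < Real.exp B := Real.exp_pos B
  have heB : Real.exp B = Real.exp M₀ * c ^ (M₀ * ε) := by
    rw [Real.rpow_def_of_pos hc0, ← Real.exp_add, hBdef]
    congr 1
    ring
  have hbd : ∀ τ : ℝ, 1 < τ → τ < c → -2 * Real.exp B ≤ d τ ∧ d τ ≤ -2 * Real.exp (-B) := by
    intro τ h1 h2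
    have hlτ : 0 ≤ Real.log τ := Real.log_nonneg h1.le
    have hlτc : Real.log τ ≤ Real.log c := Real.log_le_log (by linarith) h2.le
    have e1 : 0 ≤ ε * Real.log τ := mul_nonneg hε.le hlτ
    have e2 : ε * Real.log τ ≤ ε * Real.log c := mul_le_mul_of_nonneg_left hlτc hε.le
    have e3 : 0 ≤ ε * Real.log c := e1.trans e2
    have h3 : |ε * Real.log τ - δ| ≤ ε * Real.log c + 1 := by
      rw [abs_le]; constructor <;> linarith
    have harg : |(1/2) * G * A (f τ) * (ε * Real.log τ - δ)| ≤ B := by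
      rw [abs_mul, hBdef]
      exact mul_le_mul (hM₀ (f τ)) h3 (abs_nonneg _) (by linarith)
    constructor
    · have h4 : Real.exp ((1/2) * G * A (f τ) * (ε * Real.log τ - δ)) ≤ Real.exp B :=
        Real.exp_le_exp.mpr (le_of_abs_le harg)
      simp only [hddef]
      linarith
    · have h4 : Real.exp (-B) ≤ Real.exp ((1/2) * G * A (f τ) * (ε * Real.log τ - δ)) :=
        Real.exp_le_exp.mpr (neg_le_of_abs_le harg)
      simp only [hddef]
      linarith
  have hspeed := deriv_between f d (-2 * Real.exp B) (-2 * Real.exp (-B)) 1 c one_pos hfd hbd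
  -- the exit time t₁
  set t₁ := (c + R) / 2 with ht₁def
  clear_value t₁
  have ht₁c : t₁ ≤ c := by rw [ht₁def]; linarith
  have ht₁pos : 0 < t₁ := by rw [ht₁def]; linarith
  have ht₁half : c / 2 ≤ t₁ := by rw [ht₁def]; linarith
  have hslab1 : ∀ σ ∈ Icc t₁ c, f σ = f c + 2 * (c - σ) := by
    apply const_slope R f d hfd hd2 t₁ c ht₁pos ht₁c
    · intro σ h1 h2
      rw [ht₁def] at h1
      rw [hfc, show -c + 2 * (c - σ) = -(2 * σ - c) from by ring, abs_neg,
        abs_of_pos (by linarith)]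
      linarith
    · have hfcR : R < |f c| := by rw [hfc, abs_neg, abs_of_pos hc0]; exact hRc
      have hcf : ContinuousAt (fun σ => |f σ|) c :=
        ((hfd c hc0).differentiableAt.continuousAt).abs
      exact (hcf.tendsto.eventually (eventually_gt_nhds hfcR)).filter_mono nhdsWithin_le_nhds
  have hft₁ : f t₁ = -R := by
    have h := hslab1 t₁ ⟨le_refl _, ht₁c⟩
    rw [h, hfc, ht₁def]
    ring
  -- the smallness of ε and largeness of c
  have hMε : M₀ * ε ≤ 1/4 := by
    have h1 := (lt_div_iff₀ (by linarith : (0:ℝ) < 4 * M₀)).mp hεε₀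
    have h2 : ε * (4 * M₀) = 4 * (M₀ * ε) := by ring
    linarith
  have hMεnn : 0 ≤ M₀ * ε := mul_nonneg (by linarith) hε.le
  have hcMε : c ^ (M₀ * ε) ≤ c ^ ((1:ℝ)/4) := Real.rpow_le_rpow_of_exponent_le hc1 (by linarith)
  have hK₀c : K₀ ≤ c ^ ((3:ℝ)/4) := by
    have h1 : (K₀ ^ 2 : ℝ) ^ ((3:ℝ)/4) ≤ c ^ ((3:ℝ)/4) :=
      Real.rpow_le_rpow (by positivity) hcT (by norm_num)
    have h2 : (K₀ ^ 2 : ℝ) ^ ((3:ℝ)/4) = K₀ ^ ((3:ℝ)/2) := by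
      rw [← Real.rpow_natCast K₀ 2, ← Real.rpow_mul (by linarith : (0:ℝ) ≤ K₀)]
      norm_num
    have h3 : K₀ ≤ K₀ ^ ((3:ℝ)/2) := by
      calc K₀ = K₀ ^ (1:ℝ) := (Real.rpow_one _).symm
        _ ≤ K₀ ^ ((3:ℝ)/2) := Real.rpow_le_rpow_of_exponent_le (by linarith) (by norm_num)
    rw [h2] at h1
    linarith
  have hReB : R * Real.exp B ≤ c / 8 := by
    rw [heB]
    have h4 : c ^ ((3:ℝ)/4) * c ^ ((1:ℝ)/4) = c := by
      rw [← Real.rpow_add hc0]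
      norm_num
    calc R * (Real.exp M₀ * c ^ (M₀ * ε)) = K₀ / 8 * c ^ (M₀ * ε) := by rw [hK₀def]; ring
      _ ≤ K₀ / 8 * c ^ ((1:ℝ)/4) := mul_le_mul_of_nonneg_left hcMε (by linarith)
      _ ≤ c ^ ((3:ℝ)/4) / 8 * c ^ ((1:ℝ)/4) := by
          apply mul_le_mul_of_nonneg_right (by linarith) (by positivity)
      _ = c / 8 := by rw [div_mul_eq_mul_div, h4]
  have hReB0 : 0 ≤ R * Real.exp B := mul_nonneg (by linarith) hexpB1.le
  -- the entry time t₀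
  set τs := t₁ - R * Real.exp B with hτsdef
  clear_value τs
  have hτs1 : 3 * c / 8 ≤ τs := by rw [hτsdef]; linarith
  have hτsge1 : (1:ℝ) ≤ τs := by linarith
  have hτspos : (0:ℝ) < τs := by linarith
  have hτst₁ : τs ≤ t₁ := by rw [hτsdef]; linarith
  have hfτs : R ≤ f τs := by
    have h := (hspeed τs t₁ hτsge1 hτst₁ ht₁c).2
    rw [hft₁] at h
    rw [show t₁ - τs = R * Real.exp B from by rw [hτsdef]; ring] at h
    have h2 : -2 * Real.exp (-B) * (R * Real.exp B) = -2 * R := by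
      rw [mul_assoc, show Real.exp (-B) * (R * Real.exp B) = R * (Real.exp (-B) * Real.exp B)
        from by ring, ← Real.exp_add]
      simp
    rw [h2] at h
    linarith
  have hcont2 : ContinuousOn f (Icc τs t₁) := fun x hx =>
    ((hfd x (by linarith [hx.1])).differentiableAt.continuousAt).continuousWithinAt
  have hmem : R ∈ Icc (f t₁) (f τs) := by rw [hft₁]; exact ⟨by linarith, hfτs⟩
  obtain ⟨t₀, ht₀mem, hft₀⟩ := intermediate_value_Icc' hτst₁ hcont2 hmem
  have ht₀τs : τs ≤ t₀ := ht₀mem.1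
  have ht₀t₁ : t₀ ≤ t₁ := ht₀mem.2
  have ht₀1 : (1:ℝ) ≤ t₀ := by linarith
  have ht₀pos : (0:ℝ) < t₀ := by linarith
  -- the slab characterization
  have hiff : ∀ τ : ℝ, 0 < τ → (|f τ| ≤ R ↔ t₀ ≤ τ ∧ τ ≤ t₁) := by
    intro τ hτ
    constructor
    · intro habs
      constructor
      · by_contra hlt
        push_neg at hlt
        have h := hanti (mem_Ioi.mpr hτ) (mem_Ioi.mpr ht₀pos) hlt
        rw [hft₀] at h
        linarith [(abs_le.mp habs).2]
      · by_contra hlt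
        push_neg at hlt
        have h := hanti (mem_Ioi.mpr ht₁pos) (mem_Ioi.mpr hτ) hlt
        rw [hft₁] at h
        linarith [(abs_le.mp habs).1]
    · rintro ⟨h1, h2⟩
      rw [abs_le]
      constructor
      · rcases eq_or_lt_of_le h2 with h | h
        · exact le_of_eq (by rw [h, hft₁])
        · have hh := hanti (mem_Ioi.mpr hτ) (mem_Ioi.mpr ht₁pos) h
          rw [hft₁] at hh
          linarith
      · rcases eq_or_lt_of_le h1 with h | h
        · exact le_of_eq (by rw [← h]; exact hft₀)
        · have hh := hanti (mem_Ioi.mpr ht₀pos) (mem_Ioi.mpr hτ) h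
          rw [hft₀] at hh
          linarith
  -- the gap bound
  have hgap : t₁ - t₀ ≤ R * Real.exp B := by
    have h := (hspeed t₀ t₁ ht₀1 ht₀t₁ ht₁c).2
    rw [hft₁, hft₀] at h
    rw [show -2 * Real.exp (-B) * (t₁ - t₀) = -2 * (Real.exp (-B) * (t₁ - t₀)) from by ring] at h
    have h3 : Real.exp (-B) * (t₁ - t₀) ≤ R := by linarith
    have h4 := mul_le_mul_of_nonneg_left h3 hexpB1.le
    rw [show Real.exp B * (Real.exp (-B) * (t₁ - t₀)) = Real.exp B * Real.exp (-B) * (t₁ - t₀)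
      from by ring, ← Real.exp_add] at h4
    simp only [add_neg_cancel, Real.exp_zero, one_mul] at h4
    exact h4.trans_eq (mul_comm _ _)
  -- conversion to the final constants
  have hKε0 : 0 ≤ (M₀ + K₀) * ε := mul_nonneg (by linarith) hε.le
  have hMKε : M₀ * ε ≤ (M₀ + K₀) * ε := mul_le_mul_of_nonneg_right (by linarith) hε.le
  have hP1 : 1 ≤ c ^ ((M₀ + K₀) * ε) := Real.one_le_rpow hc1 hKε0
  have hPnn : 0 ≤ c ^ ((M₀ + K₀) * ε) := Real.rpow_nonneg hc0.le _
  have hcC : c ^ (M₀ * ε) ≤ c ^ ((M₀ + K₀) * ε) := Real.rpow_le_rpow_of_exponent_le hc1 hMKε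
  have hX : (1:ℝ) ≤ R * Real.exp M₀ :=
    hR.trans (le_mul_of_one_le_right (by linarith) hexpM₀)
  have hmain1 : R * Real.exp B ≤ (M₀ + K₀) * c ^ ((M₀ + K₀) * ε) := by
    rw [heB]
    calc R * (Real.exp M₀ * c ^ (M₀ * ε)) = R * Real.exp M₀ * c ^ (M₀ * ε) := by ring
      _ ≤ R * Real.exp M₀ * c ^ ((M₀ + K₀) * ε) := mul_le_mul_of_nonneg_left hcC (by linarith)
      _ ≤ (M₀ + K₀) * c ^ ((M₀ + K₀) * ε) := by
          apply mul_le_mul_of_nonneg_right _ hPnn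
          rw [hK₀def]
          linarith
  -- second conclusion
  have hRHS0 : 0 ≤ (M₀ + K₀) * c ^ ((M₀ + K₀) * ε) := mul_nonneg (by linarith) hPnn
  have hsecond : |f t - (c - 2 * t)| ≤ (M₀ + K₀) * c ^ ((M₀ + K₀) * ε) := by
    have hbig : 2 * R + 2 * (t₁ - t₀) ≤ (M₀ + K₀) * c ^ ((M₀ + K₀) * ε) := by
      have e1 : R * Real.exp B ≤ R * Real.exp M₀ * c ^ ((M₀ + K₀) * ε) := by
        rw [heB]
        calc R * (Real.exp M₀ * c ^ (M₀ * ε)) = R * Real.exp M₀ * c ^ (M₀ * ε) := by ring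
          _ ≤ R * Real.exp M₀ * c ^ ((M₀ + K₀) * ε) :=
            mul_le_mul_of_nonneg_left hcC (by linarith)
      have e2 : 2 * R ≤ 2 * R * c ^ ((M₀ + K₀) * ε) := by
        have h5 := mul_le_mul_of_nonneg_left hP1 (show (0:ℝ) ≤ 2 * R by linarith)
        linarith
      have e3 : 2 * R + 2 * (R * Real.exp M₀) ≤ M₀ + K₀ := by
        rw [hK₀def]
        have hRe : R ≤ R * Real.exp M₀ := le_mul_of_one_le_right (by linarith) hexpM₀
        linarith
      calc 2 * R + 2 * (t₁ - t₀)
          ≤ 2 * R * c ^ ((M₀ + K₀) * ε) + 2 * (R * Real.exp M₀ * c ^ ((M₀ + K₀) * ε)) := by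
            linarith [hgap.trans e1, e2]
        _ = (2 * R + 2 * (R * Real.exp M₀)) * c ^ ((M₀ + K₀) * ε) := by ring
        _ ≤ (M₀ + K₀) * c ^ ((M₀ + K₀) * ε) := mul_le_mul_of_nonneg_right e3 hPnn
    rcases le_or_gt t₁ t with hcase | hcase
    · have h := hslab1 t ⟨hcase, htc⟩
      rw [h, hfc, show -c + 2 * (c - t) - (c - 2 * t) = 0 from by ring, abs_zero]
      exact hRHS0
    · have habs2 : |f t - (c - 2 * t)| ≤ 2 * R + 2 * (t₁ - t₀) := by
        rcases le_or_gt t₀ t with h2 | h2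
        · have habs := (hiff t (by linarith)).2 ⟨h2, hcase.le⟩
          have e1 : c - 2 * t₁ = -R := by rw [ht₁def]; ring
          have hab := abs_le.mp habs
          rw [abs_le]
          constructor
          · linarith [hab.1]
          · linarith [hab.2]
        · have ht0' : (0:ℝ) < t := by linarith
          have hslab3 : ∀ σ ∈ Icc t t₀, f σ = f t₀ + 2 * (t₀ - σ) := by
            apply const_slope R f d hfd hd2 t t₀ ht0' h2.le
            · intro σ hσ1 hσ2
              rw [hft₀, abs_of_pos (by linarith)]
              linarith
            · filter_upwards [Ioo_mem_nhdsLT (show t₀ / 2 < t₀ by linarith)] with σ hσ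
              have hfσ := hanti (mem_Ioi.mpr (show (0:ℝ) < σ by linarith [hσ.1]))
                (mem_Ioi.mpr ht₀pos) hσ.2
              rw [hft₀] at hfσ
              exact lt_of_lt_of_le hfσ (le_abs_self _)
          have h := hslab3 t ⟨le_refl t, h2.le⟩
          rw [h, hft₀]
          have e1 : c = 2 * t₁ - R := by rw [ht₁def]; ring
          rw [abs_le]
          constructor
          · linarith
          · linarith
      linarith
  -- third conclusion
  have hthird : |f t| ≤ R → -R ≤ r - t ∧ r - t ≤ (M₀ + K₀) * t ^ ((M₀ + K₀) * ε) := by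
    intro habs
    obtain ⟨h1, h2⟩ := (hiff t (by linarith)).1 habs
    have e1 : c = 2 * t₁ - R := by rw [ht₁def]; ring
    have hrt2 : r - t = c - 2 * t := by rw [hcdef]; ring
    constructor
    · rw [hrt2]; linarith
    · have hct : c ≤ 4 * t := by linarith
      have hub2 : r - t ≤ 2 * (R * Real.exp B) - R := by
        rw [hrt2]
        have h3 : c - 2 * τs = -R + 2 * (R * Real.exp B) := by rw [hτsdef, e1]; ring
        linarith
      have hcMε4t : c ^ (M₀ * ε) ≤ 2 * t ^ ((M₀ + K₀) * ε) := by
        calc c ^ (M₀ * ε) ≤ (4 * t) ^ (M₀ * ε) := Real.rpow_le_rpow hc0.le hct hMεnn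
          _ = 4 ^ (M₀ * ε) * t ^ (M₀ * ε) := Real.mul_rpow (by norm_num) (by linarith)
          _ ≤ 2 * t ^ ((M₀ + K₀) * ε) := by
              have h4 : (4:ℝ) ^ (M₀ * ε) ≤ 2 := by
                calc (4:ℝ) ^ (M₀ * ε) ≤ 4 ^ ((1:ℝ)/2) :=
                      Real.rpow_le_rpow_of_exponent_le (by norm_num) (by linarith)
                  _ = 2 := by
                      rw [show (4:ℝ) = 2 ^ (2:ℕ) from by norm_num, ← Real.rpow_natCast 2 2,
                        ← Real.rpow_mul (by norm_num : (0:ℝ) ≤ 2)]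
                      norm_num
              have ht' : t ^ (M₀ * ε) ≤ t ^ ((M₀ + K₀) * ε) :=
                Real.rpow_le_rpow_of_exponent_le (by linarith) hMKε
              exact mul_le_mul h4 ht' (Real.rpow_nonneg (by linarith) _) (by norm_num)
      calc r - t ≤ 2 * (R * Real.exp B) - R := hub2
        _ ≤ 2 * (R * (Real.exp M₀ * c ^ (M₀ * ε))) := by rw [← heB]; linarith
        _ = 2 * R * Real.exp M₀ * c ^ (M₀ * ε) := by ring
        _ ≤ 2 * R * Real.exp M₀ * (2 * t ^ ((M₀ + K₀) * ε)) := by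
            exact mul_le_mul_of_nonneg_left hcMε4t
              (mul_nonneg (by linarith : (0:ℝ) ≤ 2 * R) (Real.exp_pos M₀).le)
        _ = 4 * R * Real.exp M₀ * t ^ ((M₀ + K₀) * ε) := by ring
        _ ≤ (M₀ + K₀) * t ^ ((M₀ + K₀) * ε) := by
            apply mul_le_mul_of_nonneg_right _ (Real.rpow_nonneg (by linarith) _)
            rw [hK₀def]
            linarith [mul_pos (show (0:ℝ) < R by linarith) (Real.exp_pos M₀), hM₀1]
  -- assembling everything
  have hqtr : q t r = f t := by
    simp only [hfdef]
    congr 1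
    ring
  simp only [hfdef] at hiff
  refine ⟨⟨t₀, t₁, ht₀pos, ht₀t₁, rfl, hiff, hgap.trans hmain1⟩, ?_, ?_⟩
  · rw [hqtr, show r - t = c - 2 * t from by rw [hcdef]; ring]
    exact hsecond
  · intro habs
    rw [hqtr] at habs
    exact hthird habs
end
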